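/- arXiv:1711.10000 — 4 statements merged into one kernel-verified Lean document; each statement's English description precedes it below -/
import Mathlib

section
/- For integers x and y and a nonnegative integer v, the identity sum_{u=0}^{v} C(x-u, u) * C(y-(v-u), v-u) = sum_{u=0}^{v} (-1)^u * C(x+y-v-u, v-u) holds, where C(z,k) denotes the generalized binomial coefficient z(z-1)...(z-k+1)/k! defined for all integers z (possibly negative). -/
/-!
Both sides satisfy the Pascal-type recurrence
`F (x + 1, y, v + 1) = F (x, y, v + 1) + F (x - 1, y, v)`, so by induction on `v` their difference
at level `v + 1` is `1`-periodic in `x`; as both sides are symmetric in `x` and `y`, it is also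
periodic in `y`, hence constant. At `x = y = v` every binomial coefficient is an ordinary one and
both sides equal `1` if `v` is even and `0` if `v` is odd.
-/

open scoped BigOperators

/-- `l` is a partition: weakly decreasing list of positive integers. -/
def IsPartitionList (l : List ℕ) : Prop :=
  l.Pairwise (· ≥ ·) ∧ ∀ x ∈ l, 0 < x

/-- `l` is a composition: list of positive integers. -/
def IsCompositionList (l : List ℕ) : Prop := ∀ x ∈ l, 0 < x

/-- cell `(i, j)` (row `i` from the top, column `j`, both 0-based) of the skew shape `lam/mu`. -/
def SkewCell (lam mu : List ℕ) (i j : ℕ) : Prop :=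
  i < lam.length ∧ mu.getD i 0 ≤ j ∧ j < lam.getD i 0

/-- Semistandard filling of the skew shape `lam/mu` (rows weakly increase left to right,
columns strictly increase top to bottom), with junk value `0` off the shape. -/
def IsSkewSSYT (lam mu : List ℕ) (T : ℕ → ℕ → ℕ) : Prop :=
  (∀ i j, ¬ SkewCell lam mu i j → T i j = 0) ∧
  (∀ i j, SkewCell lam mu i j → SkewCell lam mu i (j + 1) → T i j ≤ T i (j + 1)) ∧
  (∀ i j, SkewCell lam mu i j → SkewCell lam mu (i + 1) j → T i j < T (i + 1) j)

/-- number of cells of `lam/mu` that `T` fills with the value `v`. -/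
def skewContent (lam mu : List ℕ) (T : ℕ → ℕ → ℕ) (v : ℕ) : ℕ :=
  ∑ i ∈ Finset.range lam.length,
    ((Finset.Ico (mu.getD i 0) (lam.getD i 0)).filter fun j => T i j = v).card

/-- The skew Schur function of `lam/mu` as a formal power series in variables `x_0, x_1, …`:
the coefficient of a monomial `m` is the number of semistandard fillings of content `m`. -/
noncomputable def skewSchur (lam mu : List ℕ) : MvPowerSeries ℕ ℤ :=
  fun m => (Set.ncard {T : ℕ → ℕ → ℕ |
    IsSkewSSYT lam mu T ∧ ∀ v, skewContent lam mu T v = m v} : ℤ)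

/-- The Schur function of a partition. -/
noncomputable def schurFn (lam : List ℕ) : MvPowerSeries ℕ ℤ := skewSchur lam []

/-- Outer shape of the ribbon whose row lengths read from top to bottom are `α`. -/
def ribbonOuter (α : List ℕ) : List ℕ :=
  List.ofFn fun i : Fin α.length => (α.drop (i : ℕ)).sum - (α.length - 1 - (i : ℕ))

/-- Inner shape of the ribbon whose row lengths read from top to bottom are `α`. -/
def ribbonInner (α : List ℕ) : List ℕ :=
  List.ofFn fun i : Fin α.length =>
    (α.drop (i : ℕ)).sum - (α.length - 1 - (i : ℕ)) - α.getD (i : ℕ) 0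

/-- The ribbon Schur function of the composition `α`. -/
noncomputable def ribbonSchur (α : List ℕ) : MvPowerSeries ℕ ℤ :=
  skewSchur (ribbonOuter α) (ribbonInner α)

/-- A symmetric function is Schur-positive if it is a finite nonnegative integer
combination of Schur functions of partitions. -/
def SchurPos (f : MvPowerSeries ℕ ℤ) : Prop :=
  ∃ c : List ℕ →₀ ℕ, (∀ μ ∈ c.support, IsPartitionList μ) ∧
    f = c.sum fun μ n => (n : ℤ) • schurFn μ

/-- Strict Schur-positivity order: `f >_s g`. -/
def SchurGT (f g : MvPowerSeries ℕ ℤ) : Prop := SchurPos (f - g) ∧ f ≠ g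

/-- near-concatenation of compositions. -/
def nearConcat (a b : List ℕ) : List ℕ :=
  a.dropLast ++ (a.getLastD 0 + b.headI) :: b.tail

/-- near-concatenation of `k` copies of `b`. -/
def odotPow (b : List ℕ) : ℕ → List ℕ
  | 0 => []
  | k + 1 => nearConcat (odotPow b k) b

/-- composition of compositions `a ∘ b`. -/
def compComp (a b : List ℕ) : List ℕ := (a.map (odotPow b)).flatten

/-- `M_i` (with `i` 1-based): decrement the first part by one, increment the `i`-th part by one. -/
def Mi (α : List ℕ) (i : ℕ) : List ℕ :=
  (α.set (i - 1) (α.getD (i - 1) 0 + 1)).set 0 (α.headI - 1)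

/-- the complete homogeneous symmetric function `h_N`: the sum of all monomials of degree `N`. -/
noncomputable def hN (N : ℕ) : MvPowerSeries ℕ ℤ :=
  fun m => if (∑ v ∈ m.support, m v) = N then 1 else 0

/-- `h_λ = h_{λ_1} ⋯ h_{λ_k}`. -/
noncomputable def hProd (l : List ℕ) : MvPowerSeries ℕ ℤ := (l.map hN).prod

/-- lexicographic order on partitions (padding with zeros). -/
def LexLt (μ ν : List ℕ) : Prop :=
  ∃ k, (∀ i < k, μ.getD i 0 = ν.getD i 0) ∧ μ.getD k 0 < ν.getD k 0

/-- entrywise union (max) of two partitions. -/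
def pUnion (a b : List ℕ) : List ℕ :=
  List.ofFn fun i : Fin (max a.length b.length) => max (a.getD (i : ℕ) 0) (b.getD (i : ℕ) 0)

/-- entrywise intersection (min) of two partitions. -/
def pInter (a b : List ℕ) : List ℕ :=
  List.ofFn fun i : Fin (min a.length b.length) => min (a.getD (i : ℕ) 0) (b.getD (i : ℕ) 0)

/-- the number of end rows (first and last part) of `γ` equal to `a`. -/
def shortEnds (a : ℕ) (γ : List ℕ) : ℕ :=
  (if γ.headI = a then 1 else 0) + (if γ.getLastD 0 = a then 1 else 0)

/-- cells of the ribbon whose row lengths read from the bottom are `β`;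
cells are pairs `(row, column)`, rows counted from the bottom starting at `0`. -/
def ribbonCells (β : List ℕ) : Finset (ℕ × ℕ) :=
  (Finset.range β.length).biUnion fun i =>
    (Finset.Ico ((β.take i).sum - i) ((β.take i).sum - i + β.getD i 0)).image fun j => (i, j)

/-- The box diagonal diagram `P_{R,S}`: cells `(x, y)` (column `x`, row `y` from the bottom,
both 1-based, with the top-right corner of the cell at the point `(x, y)`) of the `R × S` grid
whose interior or top-left corner point is met by the line `y = (R/S) x`. -/
def boxDiagonal (R S : ℕ) : Finset (ℕ × ℕ) :=
  (Finset.Icc 1 S ×ˢ Finset.Icc 1 R).filter fun c =>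
    (R : ℚ) * ((c.1 : ℚ) - 1) ≤ (S : ℚ) * (c.2 : ℚ) ∧
    (S : ℚ) * ((c.2 : ℚ) - 1) < (R : ℚ) * (c.1 : ℚ)

/-- length of row `y` (from the bottom, 1-based) of `P_{R,S}`. -/
def bdRowLen (R S y : ℕ) : ℕ := ((boxDiagonal R S).filter fun c => c.2 = y).card

/-- length of column `x` (1-based) of `P_{R,S}`. -/
def bdColLen (R S x : ℕ) : ℕ := ((boxDiagonal R S).filter fun c => c.1 = x).card

/-- the set of columns occupied by row `y` of `P_{R,S}`. -/
def bdRowCols (R S y : ℕ) : Finset ℕ :=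
  ((boxDiagonal R S).filter fun c => c.2 = y).image Prod.fst

/-- generalized binomial coefficient `C(z, k) = z(z-1)⋯(z-k+1)/k!` for arbitrary integer `z`. -/
def gbinom (z : ℤ) (k : ℕ) : ℚ :=
  (∏ i ∈ Finset.range k, ((z : ℚ) - (i : ℚ))) / (Nat.factorial k : ℚ)

/-- `f(p) = ∑_{η_1+⋯+η_n = k} ∏_i C(p_i - η_i, η_i)`. -/
def jensenSum (n k : ℕ) (p : Fin n → ℤ) : ℚ :=
  ∑ η ∈ Finset.Nat.antidiagonalTuple n k, ∏ i, gbinom (p i - (η i : ℤ)) (η i)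

open Finset Function

theorem Function.Periodic.eq_of_period_one {α : Type*} {f : ℤ → α} (h : Periodic f 1)
    (a b : ℤ) : f a = f b := by
  simpa using (h.int_mul_eq a).trans (h.int_mul_eq b).symm

theorem gbinom_eq_choose (z : ℤ) (k : ℕ) : gbinom z k = Ring.choose z k := by
  have h := congrArg (Int.cast : ℤ → ℚ) (Ring.descPochhammer_eq_factorial_smul_choose z k)
  push_cast [← Polynomial.eval_eq_smeval, descPochhammer_eval_eq_prod_range, nsmul_eq_mul] at h
  rw [gbinom, h, mul_div_cancel_left₀ _ (by positivity)]

def jensenLHS (x y : ℤ) (v : ℕ) : ℤ :=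
  ∑ p ∈ antidiagonal v, Ring.choose (x - p.1) p.1 * Ring.choose (y - p.2) p.2

def jensenRHS (x y : ℤ) (v : ℕ) : ℤ :=
  ∑ p ∈ antidiagonal v, (-1) ^ p.1 * Ring.choose (x + y - v - p.1) p.2

theorem jensenLHS_comm (x y : ℤ) (v : ℕ) : jensenLHS x y v = jensenLHS y x v := by
  rw [jensenLHS, ← Nat.sum_antidiagonal_swap, jensenLHS]
  simp only [Prod.fst_swap, Prod.snd_swap, mul_comm]

theorem jensenRHS_comm (x y : ℤ) (v : ℕ) : jensenRHS x y v = jensenRHS y x v := by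
  rw [jensenRHS, jensenRHS, add_comm x]

theorem jensenLHS_add_one (x y : ℤ) (v : ℕ) :
    jensenLHS (x + 1) y (v + 1) = jensenLHS x y (v + 1) + jensenLHS (x - 1) y v := by
  have pascal (i : ℕ) : Ring.choose (x + 1 - ↑(i + 1)) (i + 1) =
      Ring.choose (x - ↑(i + 1)) (i + 1) + Ring.choose (x - 1 - i) i := by
    rw [show x + 1 - ↑(i + 1) = x - 1 - i + 1 by push_cast; ring, Ring.choose_succ_succ,
      show x - ↑(i + 1) = x - 1 - i by push_cast; ring, add_comm]
  simp only [jensenLHS, Nat.sum_antidiagonal_succ, pascal, add_mul, sum_add_distrib,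
    Nat.cast_zero, sub_zero, Ring.choose_zero_right]
  ring

theorem jensenRHS_add_one (x y : ℤ) (v : ℕ) :
    jensenRHS (x + 1) y (v + 1) = jensenRHS x y (v + 1) + jensenRHS (x - 1) y v := by
  have pascal (i j : ℕ) : Ring.choose (x + 1 + y - ↑(v + 1) - i) (j + 1) =
      Ring.choose (x + y - ↑(v + 1) - i) (j + 1) + Ring.choose (x - 1 + y - v - i) j := by
    rw [show x + 1 + y - ↑(v + 1) - i = x - 1 + y - v - i + 1 by push_cast; ring,
      Ring.choose_succ_succ, show x + y - ↑(v + 1) - i = x - 1 + y - v - i by push_cast; ring,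
      add_comm]
  simp only [jensenRHS, Nat.sum_antidiagonal_succ', pascal, mul_add, sum_add_distrib,
    Ring.choose_zero_right]
  ring

theorem jensenLHS_self (v : ℕ) : jensenLHS v v v = if Even v then 1 else 0 := by
  have diagonal : ∀ p ∈ antidiagonal v,
      Ring.choose ((v : ℤ) - p.1) p.1 * Ring.choose ((v : ℤ) - p.2) p.2 =
        if p.1 = p.2 then 1 else 0 := by
    rintro ⟨i, j⟩ h
    rw [HasAntidiagonal.mem_antidiagonal] at h
    rw [show (v : ℤ) - i = j by omega, show (v : ℤ) - j = i by omega, Ring.choose_natCast,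
      Ring.choose_natCast]
    rcases lt_trichotomy i j with hij | rfl | hij
    · simp [Nat.choose_eq_zero_of_lt hij, hij.ne]
    · simp
    · simp [Nat.choose_eq_zero_of_lt hij, hij.ne']
  rw [jensenLHS, sum_congr rfl diagonal, sum_boole]
  rcases Nat.even_or_odd' v with ⟨t, rfl | rfl⟩
  · have : (antidiagonal (2 * t)).filter (fun p => p.1 = p.2) = {(t, t)} := by
      ext ⟨i, j⟩
      simp only [mem_filter, HasAntidiagonal.mem_antidiagonal, mem_singleton, Prod.mk.injEq]
      omega
    simp [this]
  · have : (antidiagonal (2 * t + 1)).filter (fun p => p.1 = p.2) = ∅ := by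
      ext ⟨i, j⟩
      simp only [mem_filter, HasAntidiagonal.mem_antidiagonal, notMem_empty, iff_false,
        not_and]
      omega
    simp [this]

theorem jensenRHS_self (v : ℕ) : jensenRHS v v v = if Even v then 1 else 0 := by
  have summand_eq_sign : ∀ p ∈ antidiagonal v,
      (-1) ^ p.1 * Ring.choose ((v : ℤ) + v - v - p.1) p.2 = (-1) ^ p.1 := by
    rintro ⟨i, j⟩ h
    rw [HasAntidiagonal.mem_antidiagonal] at h
    rw [show (v : ℤ) + v - v - i = j by omega, Ring.choose_natCast, Nat.choose_self,
      Nat.cast_one, mul_one]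
  rw [jensenRHS, sum_congr rfl summand_eq_sign, Nat.sum_antidiagonal_eq_sum_range_succ
    (fun i _ => (-1 : ℤ) ^ i), neg_one_geom_sum]
  simp only [Nat.even_add_one, ite_not]

theorem jensenLHS_eq_jensenRHS (x y : ℤ) (v : ℕ) : jensenLHS x y v = jensenRHS x y v := by
  induction v generalizing x y with
  | zero => simp [jensenLHS, jensenRHS]
  | succ v ih =>
    let D (x y : ℤ) := jensenLHS x y (v + 1) - jensenRHS x y (v + 1)
    have periodic_left (y : ℤ) : Periodic (D · y) 1 := fun x => by
      simp only [D, jensenLHS_add_one, jensenRHS_add_one, ih]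
      ring
    have periodic_right (x : ℤ) : Periodic (D x) 1 := fun y => by
      simp only [D, jensenLHS_comm x, jensenRHS_comm x]
      exact periodic_left x y
    have diagonal : D (v + 1 : ℕ) (v + 1 : ℕ) = 0 := by
      simp only [D, jensenLHS_self, jensenRHS_self, sub_self]
    rw [← sub_eq_zero]
    calc D x y = D (v + 1 : ℕ) y := (periodic_left y).eq_of_period_one x _
      _ = D (v + 1 : ℕ) (v + 1 : ℕ) := (periodic_right _).eq_of_period_one y _
      _ = 0 := diagonal

/-- Jensen's identity (specialized at `z = -1`). -/
theorem jensen_identity (x y : ℤ) (v : ℕ) :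
    ∑ u ∈ Finset.range (v + 1),
        gbinom (x - (u : ℤ)) u * gbinom (y - ((v - u : ℕ) : ℤ)) (v - u) =
      ∑ u ∈ Finset.range (v + 1),
        (-1 : ℚ) ^ u * gbinom (x + y - (v : ℤ) - (u : ℤ)) (v - u) := by
  have h := congrArg (Int.cast : ℤ → ℚ) (jensenLHS_eq_jensenRHS x y v)
  simp only [jensenLHS, jensenRHS, Nat.sum_antidiagonal_eq_sum_range_succ_mk] at h
  push_cast at h
  simpa only [gbinom_eq_choose] using h
end

section
/- Let S >= R >= 1 and write S/R = a - epsilon with a a positive integer and epsilon in [0,1). Then in the box diagonal diagram P_{R,S} (the set of cells of the R x S grid whose interior or top-left corner is met by the line y = (R/S)x from the bottom-left to the top-right corner), counting rows from the bottom: the R-th row has length a, and for 1 <= i <= R-1 the i-th row has length a+1 if i = ceil(t/(1-epsilon)) for some integer t, and length a otherwise. In particular P_{R,S} is a ribbon. -/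
open scoped BigOperators

/-! With `q = S / R`, dividing the defining inequalities by `R` shows that row `y` consists of the
columns `x` with `⌊q (y - 1)⌋ < x ≤ ⌊q y⌋ + 1` (capped at `S`), so rows are intervals and consecutive
rows meet exactly in column `⌊q y⌋ + 1`. Writing `q = a - ε` gives `⌊q y⌋ = a y - ⌈ε y⌉`, hence a
lower row has length `a + 1 - (⌈ε y⌉ - ⌈ε (y - 1)⌉)` with the difference of ceilings in `{0, 1}`;
it vanishes exactly when some integer `m` lies in `[ε y, ε (y - 1) + 1)`, i.e. when
`y = ⌈t / (1 - ε)⌉` for `t = y - m`. The top row has length `S - ⌊S - q⌋ = ⌈q⌉ = a`. -/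

section BoxDiagonal

variable {R S : ℕ}

theorem mem_boxDiagonal_iff {x y : ℕ} :
    (x, y) ∈ boxDiagonal R S ↔
      (x ∈ Finset.Icc 1 S ∧ y ∈ Finset.Icc 1 R) ∧ R * (x - 1) ≤ S * y ∧ S * (y - 1) < R * x := by
  simp only [boxDiagonal, Finset.mem_filter, Finset.mem_product]
  refine and_congr_right fun ⟨hx, hy⟩ => ?_
  obtain ⟨x, rfl⟩ := Nat.exists_eq_add_of_le' (Finset.mem_Icc.1 hx).1
  obtain ⟨y, rfl⟩ := Nat.exists_eq_add_of_le' (Finset.mem_Icc.1 hy).1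
  simp only [Nat.add_sub_cancel, Nat.cast_add, Nat.cast_one, add_sub_cancel_right]
  constructor <;> rintro ⟨h₁, h₂⟩ <;> exact ⟨by exact_mod_cast h₁, by exact_mod_cast h₂⟩

theorem mem_boxDiagonal_row_iff (hR : 0 < R) {x y : ℕ} (hy : y ∈ Finset.Icc 1 R) :
    (x, y) ∈ boxDiagonal R S ↔ x ∈ Finset.Icc (S * (y - 1) / R + 1) (min (S * y / R + 1) S) := by
  have hlo : S * (y - 1) / R < x ↔ S * (y - 1) < R * x := by
    rw [Nat.div_lt_iff_lt_mul hR, mul_comm x]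
  have hhi : x - 1 ≤ S * y / R ↔ R * (x - 1) ≤ S * y := by
    rw [Nat.le_div_iff_mul_le hR, mul_comm]
  rw [mem_boxDiagonal_iff, ← hlo, ← hhi]
  simp only [hy, and_true, Finset.mem_Icc, le_min_iff]
  generalize S * (y - 1) / R = lo
  generalize S * y / R = hi
  omega

theorem mem_bdRowCols {x y : ℕ} : x ∈ bdRowCols R S y ↔ (x, y) ∈ boxDiagonal R S := by
  simp [bdRowCols]

theorem bdRowLen_eq_card_bdRowCols (y : ℕ) : bdRowLen R S y = (bdRowCols R S y).card := by
  refine (Finset.card_image_of_injOn fun c hc d hd hcd => ?_).symm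
  simp only [Finset.coe_filter, Set.mem_ofPred_eq] at hc hd
  exact Prod.ext hcd (hc.2.trans hd.2.symm)

theorem bdRowCols_eq (hR : 0 < R) {y : ℕ} (hy : y ∈ Finset.Icc 1 R) :
    bdRowCols R S y = Finset.Icc (S * (y - 1) / R + 1) (min (S * y / R + 1) S) := by
  ext x
  rw [mem_bdRowCols, mem_boxDiagonal_row_iff hR hy]

theorem bdRowCols_of_lt (hS : 0 < S) {y : ℕ} (hy : y ∈ Finset.Ico 1 R) :
    bdRowCols R S y = Finset.Icc (S * (y - 1) / R + 1) (S * y / R + 1) := by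
  obtain ⟨hy1, hyR⟩ := Finset.mem_Ico.1 hy
  have hdiv : S * y / R < S := (Nat.div_lt_iff_lt_mul (by omega)).2 (by gcongr)
  rw [bdRowCols_eq (by omega) (Finset.mem_Icc.2 ⟨hy1, hyR.le⟩), min_eq_left hdiv]

theorem bdRowCols_top (hR : 0 < R) :
    bdRowCols R S R = Finset.Icc (S * (R - 1) / R + 1) S := by
  rw [bdRowCols_eq hR (Finset.mem_Icc.2 ⟨hR, le_rfl⟩), Nat.mul_div_cancel _ hR,
    min_eq_right (Nat.le_succ S)]

theorem boxDiagonal_row_convex (hR : 0 < R) {x x' x'' y : ℕ} (hy : y ∈ Finset.Icc 1 R)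
    (hx : (x, y) ∈ boxDiagonal R S) (hx'' : (x'', y) ∈ boxDiagonal R S)
    (h₁ : x ≤ x') (h₂ : x' ≤ x'') : (x', y) ∈ boxDiagonal R S := by
  rw [mem_boxDiagonal_row_iff hR hy, Finset.mem_Icc] at *
  exact ⟨hx.1.trans h₁, h₂.trans hx''.2⟩

theorem card_bdRowCols_inter_succ (hS : 0 < S) {y : ℕ} (hy : y ∈ Finset.Ico 1 R) :
    (bdRowCols R S y ∩ bdRowCols R S (y + 1)).card = 1 := by
  obtain ⟨hy1, hyR⟩ := Finset.mem_Ico.1 hy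
  have hlo : S * (y - 1) / R ≤ S * y / R := Nat.div_le_div_right (by gcongr; omega)
  have hhi : S * y / R ≤ S * (y + 1) / R := Nat.div_le_div_right (by gcongr; omega)
  have hS' : S * y / R < S := (Nat.div_lt_iff_lt_mul (by omega)).2 (by gcongr)
  suffices bdRowCols R S y ∩ bdRowCols R S (y + 1) = {S * y / R + 1} by
    rw [this, Finset.card_singleton]
  ext x
  rw [bdRowCols_of_lt hS hy, bdRowCols_eq (by omega) (by simp; omega), Nat.add_sub_cancel]
  simp only [Finset.mem_inter, Finset.mem_Icc, Finset.mem_singleton, le_min_iff]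
  omega

end BoxDiagonal

section FloorCeil

variable {K : Type*} [Field K] [LinearOrder K] [IsStrictOrderedRing K] [FloorRing K]

theorem Int.floor_intCast_sub_mul (n k : ℤ) (ε : K) : ⌊((n : K) - ε) * k⌋ = n * k - ⌈ε * k⌉ := by
  rw [sub_mul, ← Int.cast_mul, sub_eq_add_neg, Int.floor_intCast_add, Int.floor_neg, sub_eq_add_neg]

theorem Int.exists_eq_ceil_div_one_sub_iff {ε : K} (hε : ε < 1) (y : ℤ) :
    (∃ t : ℤ, y = ⌈(t : K) / (1 - ε)⌉) ↔ ⌈ε * y⌉ ≤ ⌈ε * (y - 1)⌉ := by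
  have hpos : 0 < 1 - ε := sub_pos.2 hε
  have hceil : ∀ t : ℤ, y = ⌈(t : K) / (1 - ε)⌉ ↔
      ε * y ≤ ((y - t : ℤ) : K) ∧ ((y - t : ℤ) : K) < ε * (y - 1) + 1 := by
    intro t
    rw [eq_comm, Int.ceil_eq_iff, lt_div_iff₀ hpos, div_le_iff₀ hpos]
    push_cast
    constructor <;> rintro ⟨h₁, h₂⟩ <;> constructor <;> linarith
  simp only [hceil]
  constructor
  · rintro ⟨t, h₁, h₂⟩
    have hle : ⌈ε * y⌉ ≤ y - t := Int.ceil_le.2 h₁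
    have hlt : y - t - 1 < ⌈ε * (y - 1)⌉ := Int.lt_ceil.2 (by push_cast at h₂ ⊢; linarith)
    omega
  · intro h
    refine ⟨y - ⌈ε * y⌉, ?_, ?_⟩ <;> rw [sub_sub_cancel]
    · exact Int.le_ceil _
    · exact (Int.cast_le.2 h).trans_lt (Int.ceil_lt_add_one _)

end FloorCeil

theorem Nat.cast_mul_div_eq_floor (S R k : ℕ) : ((S * k / R : ℕ) : ℤ) = ⌊(S : ℚ) / R * k⌋ := by
  rw [← Nat.floor_div_eq_div (K := ℚ), Int.natCast_floor_eq_floor (by positivity)]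
  push_cast; ring_nf

section RowLengths

variable {R S a : ℕ} {ε : ℚ}

theorem bdRowLen_top (hR : 0 < R) (h : (S : ℚ) / R = a - ε) (hε0 : 0 ≤ ε) (hε1 : ε < 1) :
    bdRowLen R S R = a := by
  have hfloor : ⌊(S : ℚ) / R * (R - 1 : ℕ)⌋ = S - a := by
    have hSR : (S : ℚ) / R * R = S := div_mul_cancel₀ _ (by positivity)
    rw [Int.floor_eq_iff, Nat.cast_pred hR]
    push_cast
    constructor <;> nlinarith
  have hcast := Nat.cast_mul_div_eq_floor S R (R - 1)
  rw [hfloor] at hcast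
  rw [bdRowLen_eq_card_bdRowCols, bdRowCols_top hR, Nat.card_Icc]
  generalize S * (R - 1) / R = m at hcast
  omega

theorem bdRowLen_of_lt (hS : 0 < S) (h : (S : ℚ) / R = a - ε) (hε0 : 0 ≤ ε) (hε1 : ε ≤ 1)
    {y : ℕ} (hy : y ∈ Finset.Ico 1 R) :
    bdRowLen R S y = if ⌈ε * y⌉ ≤ ⌈ε * (y - 1)⌉ then a + 1 else a := by
  obtain ⟨hy1, hyR⟩ := Finset.mem_Ico.1 hy
  have hcast : ∀ k : ℕ, ((S * k / R : ℕ) : ℤ) = a * k - ⌈ε * k⌉ := fun k => by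
    rw [Nat.cast_mul_div_eq_floor, h]
    exact_mod_cast Int.floor_intCast_sub_mul a k ε
  have hdiff : ((S * y / R : ℕ) : ℤ) - (S * (y - 1) / R : ℕ) =
      a - (⌈ε * y⌉ - ⌈ε * (y - 1)⌉) := by
    rw [hcast, hcast, Nat.cast_pred hy1, Nat.cast_pred hy1]
    ring
  have hmono : ⌈ε * (y - 1)⌉ ≤ ⌈ε * y⌉ := Int.ceil_mono (by nlinarith)
  have hstep : ⌈ε * y⌉ ≤ ⌈ε * (y - 1)⌉ + 1 := by
    rw [← Int.ceil_add_one]; exact Int.ceil_mono (by nlinarith)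
  rw [bdRowLen_eq_card_bdRowCols, bdRowCols_of_lt hS hy, Nat.card_Icc]
  generalize S * y / R = m at hdiff
  generalize S * (y - 1) / R = m' at hdiff
  split_ifs <;> omega

end RowLengths

theorem boxDiagonal_row_lengths_general (R S a : ℕ) (ε : ℚ) (hR : 1 ≤ R)
    (ha : 1 ≤ a) (hε0 : 0 ≤ ε) (hε1 : ε < 1)
    (h : (S : ℚ) / (R : ℚ) = (a : ℚ) - ε) :
    bdRowLen R S R = a ∧
    (∀ i, 1 ≤ i → i ≤ R - 1 →
      ((∃ t : ℤ, (i : ℤ) = ⌈(t : ℚ) / (1 - ε)⌉) → bdRowLen R S i = a + 1) ∧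
      ((¬ ∃ t : ℤ, (i : ℤ) = ⌈(t : ℚ) / (1 - ε)⌉) → bdRowLen R S i = a)) ∧
    (∀ i x x' x'', 1 ≤ i → i ≤ R → (x, i) ∈ boxDiagonal R S → (x'', i) ∈ boxDiagonal R S →
      x ≤ x' → x' ≤ x'' → (x', i) ∈ boxDiagonal R S) ∧
    (∀ i, 1 ≤ i → i < R → (bdRowCols R S i ∩ bdRowCols R S (i + 1)).card = 1) := by
  have hS : 0 < S := by
    have ha' : (1 : ℚ) ≤ a := by exact_mod_cast ha
    have hq : (0 : ℚ) < S / R := by rw [h]; linarith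
    exact Nat.cast_pos.1 ((div_pos_iff_of_pos_right (by positivity)).1 hq)
  refine ⟨bdRowLen_top hR h hε0 hε1, fun i hi1 hiR => ?_,
    fun i _ _ _ hi1 hiR => boxDiagonal_row_convex hR (Finset.mem_Icc.2 ⟨hi1, hiR⟩),
    fun i hi1 hiR => card_bdRowCols_inter_succ hS (Finset.mem_Ico.2 ⟨hi1, hiR⟩)⟩
  have hrow := bdRowLen_of_lt hS h hε0 hε1.le (Finset.mem_Ico.2 ⟨hi1, by omega⟩)
  have hceil := Int.exists_eq_ceil_div_one_sub_iff hε1 (i : ℤ)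
  push_cast at hceil
  rw [hceil]
  exact ⟨fun hc => by rw [hrow, if_pos hc], fun hc => by rw [hrow, if_neg hc]⟩

/-- row lengths of the box diagonal diagram `P_{R,S}` for `S ≥ R ≥ 1`,
writing `S/R = a - ε` with `a ≥ 1` and `ε ∈ [0,1)`: the `R`-th row has length `a`, and for
`1 ≤ i ≤ R-1` the `i`-th row has length `a+1` exactly when `i = ⌈t/(1-ε)⌉` for some integer
`t`, and length `a` otherwise.  Moreover `P_{R,S}` is a ribbon: each row is a contiguous
interval of cells and consecutive rows overlap in exactly one column. -/
theorem boxDiagonal_row_lengths (R S a : ℕ) (ε : ℚ) (hR : 1 ≤ R) (hRS : R ≤ S)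
    (ha : 1 ≤ a) (hε0 : 0 ≤ ε) (hε1 : ε < 1)
    (h : (S : ℚ) / (R : ℚ) = (a : ℚ) - ε) :
    bdRowLen R S R = a ∧
    (∀ i, 1 ≤ i → i ≤ R - 1 →
      ((∃ t : ℤ, (i : ℤ) = ⌈(t : ℚ) / (1 - ε)⌉) → bdRowLen R S i = a + 1) ∧
      ((¬ ∃ t : ℤ, (i : ℤ) = ⌈(t : ℚ) / (1 - ε)⌉) → bdRowLen R S i = a)) ∧
    (∀ i x x' x'', 1 ≤ i → i ≤ R → (x, i) ∈ boxDiagonal R S → (x'', i) ∈ boxDiagonal R S →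
      x ≤ x' → x' ≤ x'' → (x', i) ∈ boxDiagonal R S) ∧
    (∀ i, 1 ≤ i → i < R → (bdRowCols R S i ∩ bdRowCols R S (i + 1)).card = 1) :=
  boxDiagonal_row_lengths_general R S a ε hR ha hε0 hε1 h
end

section
/- Let f be a nonzero homogeneous symmetric function, and write f = c_lambda h_lambda + sum_{mu >_lex lambda} c_mu h_mu in the complete homogeneous basis with c_lambda nonzero and lambda lexicographically least among partitions appearing. If f is Schur-positive, then c_lambda > 0. -/
open scoped BigOperators

/-
Write `f = ∑ c_μ h_μ`. Each `h_μ` expands as `∑_φ K_{φμ} s_φ`, where the Kostka number `K_{φμ}`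
counts semistandard tableaux of shape `φ` and content `μ`. Since the entries of row `i` of such a
tableau are at least `i`, the content is dominated by the shape, so `K_{φμ} = 0` unless
`μ ≤ φ` lexicographically, and `K_{μμ} = 1`. Hence the coefficient of `s_λ` in `f` is exactly
`c_λ`. The same triangularity makes the Schur functions linearly independent, so this is also
the coefficient of `s_λ` in the nonnegative expansion given by Schur positivity: `c_λ ≥ 0`.

The expansion of `h_μ` comes from iterating Pieri's rule `s_ν h_r = ∑ s_κ` (over horizontal
`r`-strips `κ / ν`), proved coefficientwise by induction on the number of variables: deleting the
largest entry of a tableau leaves a tableau whose shape differs by a horizontal strip, and the two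
resulting double sums over chains of strips are matched by a reflection.
-/

open Finset
open Finsupp (degree degree_apply)

namespace Finsupp

variable {M : Type*}

noncomputable def natTail [Zero M] (f : ℕ →₀ M) : ℕ →₀ M :=
  f.comapDomain Nat.succ Nat.succ_injective.injOn

noncomputable def natCons [AddCommMonoid M] (a : M) (f : ℕ →₀ M) : ℕ →₀ M :=
  single 0 a + f.mapDomain Nat.succ

@[simp] lemma natTail_apply [Zero M] (f : ℕ →₀ M) (i : ℕ) : f.natTail i = f (i + 1) := rfl

@[simp] lemma natCons_zero [AddCommMonoid M] (a : M) (f : ℕ →₀ M) : natCons a f 0 = a := by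
  simp [natCons, mapDomain_of_notMem_range]

@[simp] lemma natCons_succ [AddCommMonoid M] (a : M) (f : ℕ →₀ M) (i : ℕ) :
    natCons a f (i + 1) = f i := by
  simp [natCons, mapDomain_apply Nat.succ_injective]

lemma natCons_natTail [AddCommMonoid M] (f : ℕ →₀ M) : natCons (f 0) f.natTail = f := by
  ext (_ | i) <;> simp

lemma natTail_natCons [AddCommMonoid M] (a : M) (f : ℕ →₀ M) : (natCons a f).natTail = f := by
  ext i; simp

lemma degree_natCons [AddCommMonoid M] (a : M) (f : ℕ →₀ M) :
    degree (natCons a f) = a + degree f := by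
  simp [natCons, degree_mapDomain]

lemma degree_eq_add_degree_natTail [AddCommMonoid M] (f : ℕ →₀ M) :
    degree f = f 0 + degree f.natTail := by
  conv_lhs => rw [← natCons_natTail f]
  exact degree_natCons _ _

lemma degree_eq_sum_of_support_subset {ι : Type*} [AddCommMonoid M] (f : ι →₀ M) {s : Finset ι}
    (h : f.support ⊆ s) : degree f = ∑ i ∈ s, f i :=
  sum_subset h fun _ _ hi => notMem_support_iff.mp hi

lemma degree_sup_add_degree_inf (f g : ℕ →₀ ℕ) :
    degree (f ⊔ g) + degree (f ⊓ g) = degree f + degree g := by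
  rw [← map_add, ← map_add]
  congr 1
  ext i
  simp [max_add_min]

lemma le_iff_apply_zero_le_and_natTail_le {f g : ℕ →₀ ℕ} :
    f ≤ g ↔ f 0 ≤ g 0 ∧ f.natTail ≤ g.natTail := by
  simp only [Finsupp.le_def, natTail_apply]
  exact ⟨fun h => ⟨h 0, fun i => h (i + 1)⟩, fun h i => i.casesOn h.1 h.2⟩

lemma toLex_le_of_sum_range_le {f g : ℕ →₀ ℕ}
    (h : ∀ k, ∑ i ∈ range k, f i ≤ ∑ i ∈ range k, g i) : toLex f ≤ toLex g := by
  by_cases hfg : f = g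
  · rw [hfg]
  have hex : ∃ i, f i ≠ g i := by
    by_contra! hall
    exact hfg (Finsupp.ext hall)
  have hprefix : ∀ j < Nat.find hex, f j = g j := fun j hj => not_not.mp (Nat.find_min hex hj)
  refine (Finsupp.Lex.lt_iff.mpr ⟨Nat.find hex, hprefix, ?_⟩).le
  have hpre : ∑ j ∈ range (Nat.find hex), f j = ∑ j ∈ range (Nat.find hex), g j :=
    Finset.sum_congr rfl fun j hj => hprefix j (mem_range.mp hj)
  have hk := h (Nat.find hex + 1)
  rw [sum_range_succ, sum_range_succ, hpre] at hk
  show f _ < g _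
  exact lt_of_le_of_ne (by omega) (Nat.find_spec hex)

lemma sum_Iic_add_single {ι : Type*} [DecidableEq ι] [AddCommMonoid M] {m : ι →₀ ℕ}
    {n : ι} (hm : m n = 0) (t : ℕ) (g : (ι →₀ ℕ) → M) :
    ∑ a ∈ Iic (m + single n t), g a = ∑ s ∈ range (t + 1), ∑ a ∈ Iic m, g (a + single n s) := by
  rw [Finset.sum_comm, ← sum_product']
  refine sum_nbij' (fun a => (a.erase n, a n)) (fun x => x.1 + single n x.2) (fun a ha => ?_)
    (fun x hx => ?_) (fun a _ => erase_add_single n a) (fun x hx => ?_)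
    (fun a _ => by rw [erase_add_single])
  · rw [mem_Iic, Finsupp.le_def] at ha
    rw [mem_product, mem_Iic, mem_range, Finsupp.le_def]
    refine ⟨fun i => ?_, ?_⟩
    · rw [erase_apply]
      split_ifs with h
      · exact Nat.zero_le _
      · simpa [single_eq_of_ne h] using ha i
    · simpa [hm] using ha n
  · rw [mem_product, mem_Iic, mem_range] at hx
    rw [mem_Iic]
    exact add_le_add hx.1 (single_le_single.mpr (by omega))
  · rw [mem_product, mem_Iic] at hx
    have hx₁ : x.1 n = 0 := Nat.eq_zero_of_le_zero (hm ▸ hx.1 n)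
    ext <;> simp [erase_add, hx₁]

lemma sum_antidiagonal_eq_sum_Iic {ι : Type*} [DecidableEq ι] [AddCommMonoid M]
    (m : ι →₀ ℕ) (g : (ι →₀ ℕ) → M) :
    ∑ p ∈ antidiagonal m, g p.1 = ∑ a ∈ Iic m, g a := by
  refine sum_nbij' Prod.fst (fun a => (a, m - a)) (fun p hp => ?_) (fun a ha => ?_)
    (fun p hp => ?_) (fun a _ => rfl) (fun _ _ => rfl)
  · rw [HasAntidiagonal.mem_antidiagonal] at hp
    rw [mem_Iic, ← hp]
    exact le_self_add
  · rw [mem_Iic] at ha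
    rw [HasAntidiagonal.mem_antidiagonal, add_tsub_cancel_of_le ha]
  · rw [HasAntidiagonal.mem_antidiagonal] at hp
    rw [← hp, add_tsub_cancel_left]

lemma antitone_zero : Antitone ⇑(0 : ℕ →₀ ℕ) := fun _ _ _ => le_rfl

end Finsupp

open Finsupp (natCons natCons_zero natTail_natCons natCons_natTail degree_natCons)

lemma Antitone.eq_zero_of_degree_le {φ : ℕ →₀ ℕ} (hφ : Antitone φ) {i : ℕ} (hi : degree φ ≤ i) :
    φ i = 0 := by
  by_contra h
  have hsub : range (i + 1) ⊆ φ.support := fun j hj =>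
    Finsupp.mem_support_iff.mpr (by have := hφ (mem_range_succ_iff.mp hj); omega)
  have : i + 1 ≤ degree φ := calc
    i + 1 = ∑ _j ∈ range (i + 1), 1 := by simp
    _ ≤ ∑ j ∈ range (i + 1), φ j := sum_le_sum fun j hj => by
        have := hφ (mem_range_succ_iff.mp hj); omega
    _ ≤ degree φ := (sum_le_sum_of_subset hsub).trans_eq (degree_apply φ).symm
  omega

lemma Finset.filter_range_eq_range_card {P : ℕ → Prop} [DecidablePred P] :
    ∀ {k : ℕ}, (∀ j j', j ≤ j' → j' < k → P j' → P j) →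
      {j ∈ range k | P j} = range #{j ∈ range k | P j}
  | 0, _ => by simp
  | k + 1, hP => by
    by_cases hk : P k
    · have hall : {j ∈ range (k + 1) | P j} = range (k + 1) :=
        filter_true_of_mem fun j hj => hP j k (mem_range_succ_iff.mp hj) k.lt_succ_self hk
      rw [hall, card_range]
    · rw [Finset.range_add_one, filter_insert, if_neg hk]
      exact filter_range_eq_range_card fun j j' hjj hj' => hP j j' hjj (hj'.trans k.lt_succ_self)

lemma Finset.sum_sum_eq_sum_card_filter_smul {α β M : Type*} [DecidableEq β] [AddCommMonoid M]
    {s : Finset α} {t : Finset β} {u : α → Finset β} (hu : ∀ a ∈ s, u a ⊆ t) (f : β → M) :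
    ∑ a ∈ s, ∑ b ∈ u a, f b = ∑ b ∈ t, #{a ∈ s | b ∈ u a} • f b := by
  rw [sum_comm' (t' := t) (s' := fun b => {a ∈ s | b ∈ u a}) fun a b => by
    rw [mem_filter]
    exact ⟨fun h => ⟨h, hu a h.1 h.2⟩, fun h => h.1⟩]
  simp only [sum_const]

lemma List.degree_toFinsupp (l : List ℕ) : degree l.toFinsupp = l.sum := by
  induction l using List.reverseRecOn with
  | nil => simp
  | append_singleton l r ih =>
    rw [List.toFinsupp_concat_eq_toFinsupp_add_single, map_add, ih, Finsupp.degree_single,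
      List.sum_append, List.sum_singleton]

lemma List.antitone_toFinsupp {l : List ℕ} (hl : l.Pairwise (· ≥ ·)) : Antitone l.toFinsupp := by
  refine antitone_nat_of_succ_le fun i => ?_
  rw [List.toFinsupp_apply, List.toFinsupp_apply]
  by_cases h : i + 1 < l.length
  · rw [List.getD_eq_getElem l 0 h, List.getD_eq_getElem l 0 (by omega)]
    exact List.pairwise_iff_getElem.mp hl i (i + 1) (by omega) h (by omega)
  · rw [List.getD_eq_default l 0 (by omega)]
    exact Nat.zero_le _

lemma LexLt.toLex_lt {l l' : List ℕ} (h : LexLt l l') : toLex l.toFinsupp < toLex l'.toFinsupp :=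
  Finsupp.Lex.lt_iff.mpr h

section SchurExpansion

open scoped Classical

/-! ### Semistandard tableaux and Kostka numbers -/

noncomputable def partitionsOf (N : ℕ) : Finset (ℕ →₀ ℕ) :=
  {φ ∈ (range N).finsuppAntidiag N | Antitone φ}

lemma mem_partitionsOf {N : ℕ} {φ : ℕ →₀ ℕ} : φ ∈ partitionsOf N ↔ Antitone φ ∧ degree φ = N := by
  rw [partitionsOf, mem_filter, mem_finsuppAntidiag, and_comm, and_congr_right_iff]
  intro hφ
  constructor
  · rintro ⟨hsum, hsupp⟩
    rwa [Finsupp.degree_eq_sum_of_support_subset φ hsupp]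
  · intro hdeg
    have hsupp : φ.support ⊆ range N := fun i hi => mem_range.mpr <| by
      by_contra h
      exact Finsupp.mem_support_iff.mp hi (hφ.eq_zero_of_degree_le (by omega))
    exact ⟨(Finsupp.degree_eq_sum_of_support_subset φ hsupp).symm.trans hdeg, hsupp⟩

lemma partitionsOf_zero : partitionsOf 0 = {0} := by
  ext φ
  rw [mem_partitionsOf, mem_singleton, Finsupp.degree_eq_zero_iff]
  exact ⟨And.right, fun h => ⟨h ▸ Finsupp.antitone_zero, h⟩⟩

/- A shape `φ : ℕ →₀ ℕ` lists the row lengths `φ 0, φ 1, …` of a Young diagram (a partition when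
antitone), and a content `m : ℕ →₀ ℕ` the multiplicity `m v` of each entry `v`. A tableau is any
`T : ℕ → ℕ → ℕ`, read as `T i j` in row `i` and column `j`, and normalised to `0` off the shape. -/

def shapeCells (φ : ℕ →₀ ℕ) : Finset (ℕ × ℕ) := φ.support.biUnion fun i => {i} ×ˢ range (φ i)

@[simp] lemma mem_shapeCells {φ : ℕ →₀ ℕ} {p : ℕ × ℕ} : p ∈ shapeCells φ ↔ p.2 < φ p.1 := by
  obtain ⟨i, j⟩ := p
  simp only [shapeCells, mem_biUnion, mem_product, mem_singleton, mem_range,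
    Finsupp.mem_support_iff]
  exact ⟨fun ⟨_, _, rfl, h⟩ => h, fun h => ⟨i, by omega, rfl, h⟩⟩

lemma card_filter_shapeCells_fst_eq (φ : ℕ →₀ ℕ) (i : ℕ) (q : ℕ × ℕ → Prop) [DecidablePred q] :
    #{p ∈ shapeCells φ | p.1 = i ∧ q p} = #{j ∈ range (φ i) | q (i, j)} := by
  rw [← card_image_of_injective {j ∈ range (φ i) | q (i, j)} (Prod.mk_right_injective i)]
  congr 1
  ext ⟨i', j⟩
  simp only [mem_filter, mem_shapeCells, mem_image, mem_range, Prod.mk.injEq]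
  constructor
  · rintro ⟨h, rfl, hq⟩
    exact ⟨j, ⟨h, hq⟩, rfl, rfl⟩
  · rintro ⟨j, ⟨h, hq⟩, rfl, rfl⟩
    exact ⟨h, rfl, hq⟩

lemma card_filter_shapeCells_fst_lt (φ : ℕ →₀ ℕ) (k : ℕ) :
    #{p ∈ shapeCells φ | p.1 < k} = ∑ i ∈ range k, φ i := by
  rw [card_eq_sum_card_fiberwise (f := Prod.fst) (t := range k) fun p hp => by
    simpa using (mem_filter.mp hp).2]
  refine sum_congr rfl fun i hi => ?_
  have h := card_filter_shapeCells_fst_eq φ i fun _ => True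
  simp only [and_true, filter_true, card_range] at h
  rw [filter_filter, ← h]
  congr 1
  refine filter_congr fun p _ => ?_
  rw [mem_range] at hi
  constructor
  · exact And.right
  · rintro rfl
    exact ⟨hi, rfl⟩

lemma card_shapeCells (φ : ℕ →₀ ℕ) : #(shapeCells φ) = degree φ := by
  rw [card_eq_sum_card_fiberwise (f := Prod.fst) (t := φ.support) fun p hp => by
    simp only [mem_shapeCells, mem_coe, Finsupp.mem_support_iff] at hp ⊢
    omega, degree_apply]
  refine sum_congr rfl fun i _ => ?_
  simpa using card_filter_shapeCells_fst_eq φ i fun _ => True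

lemma shapeCells_mono {π κ : ℕ →₀ ℕ} (h : π ≤ κ) : shapeCells π ⊆ shapeCells κ :=
  fun p hp => mem_shapeCells.mpr ((mem_shapeCells.mp hp).trans_le (h p.1))

def tableauContent (φ : ℕ →₀ ℕ) (T : ℕ → ℕ → ℕ) (v : ℕ) : ℕ := #{p ∈ shapeCells φ | T p.1 p.2 = v}

structure IsSSYT (φ m : ℕ →₀ ℕ) (T : ℕ → ℕ → ℕ) : Prop where
  eq_zero : ∀ i j, φ i ≤ j → T i j = 0
  row_le : ∀ i j, j + 1 < φ i → T i j ≤ T i (j + 1)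
  col_lt : ∀ i j, j < φ (i + 1) → T i j < T (i + 1) j
  content_eq : ∀ v, tableauContent φ T v = m v

noncomputable def kostka (φ m : ℕ →₀ ℕ) : ℕ := {T | IsSSYT φ m T}.ncard

noncomputable def schurSeries (φ : ℕ →₀ ℕ) : MvPowerSeries ℕ ℤ := fun m => kostka φ m

@[simp] lemma coeff_schurSeries (φ m : ℕ →₀ ℕ) :
    MvPowerSeries.coeff m (schurSeries φ) = kostka φ m := rfl

namespace IsSSYT

variable {φ m : ℕ →₀ ℕ} {T : ℕ → ℕ → ℕ}

lemma mem_support (hT : IsSSYT φ m T) {i j : ℕ} (h : j < φ i) : T i j ∈ m.support := by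
  rw [Finsupp.mem_support_iff, ← hT.content_eq, tableauContent, ← Nat.pos_iff_ne_zero, card_pos]
  exact ⟨(i, j), by simp [h]⟩

lemma row_mono (hT : IsSSYT φ m T) {i j j' : ℕ} (hjj : j ≤ j') (hj' : j' < φ i) :
    T i j ≤ T i j' := by
  induction j', hjj using Nat.le_induction with
  | base => exact le_rfl
  | succ k _ ih => exact (ih (by omega)).trans (hT.row_le i k hj')

lemma le_entry (hφ : Antitone φ) (hT : IsSSYT φ m T) : ∀ {i j : ℕ}, j < φ i → i ≤ T i j
  | 0, _, _ => Nat.zero_le _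
  | i + 1, j, h => (hT.le_entry hφ (h.trans_le (hφ i.le_succ))).trans_lt (hT.col_lt i j h)

lemma card_filter_entry_lt (hT : IsSSYT φ m T) (k : ℕ) :
    #{p ∈ shapeCells φ | T p.1 p.2 < k} = ∑ v ∈ range k, m v := by
  rw [card_eq_sum_card_fiberwise (f := fun p => T p.1 p.2) (t := range k) fun p hp => by
    simpa using (mem_filter.mp hp).2]
  refine sum_congr rfl fun v hv => ?_
  rw [← hT.content_eq, tableauContent, filter_filter]
  congr 1
  refine filter_congr fun p _ => ?_
  rw [mem_range] at hv
  constructor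
  · exact And.right
  · intro h
    exact ⟨h ▸ hv, h⟩

lemma degree_eq (hT : IsSSYT φ m T) : degree m = degree φ := by
  rw [← card_shapeCells φ, card_eq_sum_card_fiberwise (f := fun p => T p.1 p.2) (t := m.support)
    fun p hp => hT.mem_support (mem_shapeCells.mp hp), degree_apply]
  exact sum_congr rfl fun v _ => (hT.content_eq v).symm

lemma filter_entry_lt_subset (hφ : Antitone φ) (hT : IsSSYT φ m T) (k : ℕ) :
    {p ∈ shapeCells φ | T p.1 p.2 < k} ⊆ {p ∈ shapeCells φ | p.1 < k} :=
  monotone_filter_right _ fun _ hp hlt => (hT.le_entry hφ (mem_shapeCells.mp hp)).trans_lt hlt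

lemma sum_range_le (hφ : Antitone φ) (hT : IsSSYT φ m T) (k : ℕ) :
    ∑ v ∈ range k, m v ≤ ∑ i ∈ range k, φ i := by
  rw [← hT.card_filter_entry_lt, ← card_filter_shapeCells_fst_lt]
  exact card_le_card (hT.filter_entry_lt_subset hφ k)

end IsSSYT

lemma finite_setOf_isSSYT (φ m : ℕ →₀ ℕ) : {T | IsSSYT φ m T}.Finite := by
  let extend : (shapeCells φ → m.support) → ℕ → ℕ → ℕ := fun F i j =>
    if h : (i, j) ∈ shapeCells φ then F ⟨(i, j), h⟩ else 0
  refine (Set.finite_range extend).subset fun T hT =>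
    ⟨fun p => ⟨T p.1.1 p.1.2, hT.mem_support (mem_shapeCells.mp p.2)⟩, ?_⟩
  funext i j
  by_cases h : (i, j) ∈ shapeCells φ
  · simp only [extend, dif_pos h]
  · simp only [extend, dif_neg h]
    exact (hT.eq_zero i j (by simpa using h)).symm

lemma degree_eq_of_kostka_ne_zero {φ m : ℕ →₀ ℕ} (h : kostka φ m ≠ 0) : degree m = degree φ :=
  (Set.nonempty_of_ncard_ne_zero h).choose_spec.degree_eq

lemma isSSYT_rowIndex {φ : ℕ →₀ ℕ} (hφ : Antitone φ) :
    IsSSYT φ φ fun i j => if j < φ i then i else 0 where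
  eq_zero i j h := if_neg (not_lt.mpr h)
  row_le i j h := by simp [h, (Nat.lt_succ_self j).trans h]
  col_lt i j h := by simp [h, h.trans_le (hφ i.le_succ)]
  content_eq v := by
    rw [tableauContent, ← card_range (φ v), ← filter_true (range (φ v)),
      ← card_filter_shapeCells_fst_eq φ v fun _ => True]
    congr 1
    refine filter_congr fun p hp => ?_
    rw [if_pos (mem_shapeCells.mp hp), and_true]

/-- The cells with entry `≤ i` lie in rows `≤ i`, and content `φ` makes them equally many. -/
lemma IsSSYT.entry_eq_row {φ : ℕ →₀ ℕ} (hφ : Antitone φ) {T : ℕ → ℕ → ℕ} (hT : IsSSYT φ φ T)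
    {i j : ℕ} (h : j < φ i) : T i j = i := by
  have heq := eq_of_subset_of_card_le (hT.filter_entry_lt_subset hφ (i + 1)) (by
    rw [hT.card_filter_entry_lt, card_filter_shapeCells_fst_lt])
  have hmem : (i, j) ∈ {p ∈ shapeCells φ | T p.1 p.2 < i + 1} := by
    rw [heq]
    simp [h]
  have := hT.le_entry hφ h
  simp only [mem_filter] at hmem
  omega

lemma kostka_self {φ : ℕ →₀ ℕ} (hφ : Antitone φ) : kostka φ φ = 1 := by
  rw [kostka, Set.ncard_eq_one]
  refine ⟨_, Set.eq_singleton_iff_unique_mem.mpr ⟨isSSYT_rowIndex hφ, fun T hT => ?_⟩⟩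
  funext i j
  split_ifs with h
  · exact hT.entry_eq_row hφ h
  · exact hT.eq_zero i j (not_lt.mp h)

lemma kostka_zero_right (φ : ℕ →₀ ℕ) : kostka φ 0 = if φ = 0 then 1 else 0 := by
  split_ifs with h
  · subst h
    exact kostka_self Finsupp.antitone_zero
  · by_contra hne
    exact h ((Finsupp.degree_eq_zero_iff φ).mp (degree_eq_of_kostka_ne_zero hne).symm)

lemma kostka_zero_left (m : ℕ →₀ ℕ) : kostka 0 m = if m = 0 then 1 else 0 := by
  split_ifs with h
  · subst h
    exact kostka_self Finsupp.antitone_zero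
  · by_contra hne
    exact h ((Finsupp.degree_eq_zero_iff m).mp (degree_eq_of_kostka_ne_zero hne))

lemma schurSeries_zero : schurSeries 0 = 1 := by
  ext m
  rw [MvPowerSeries.coeff_one]
  show (kostka 0 m : ℤ) = _
  rw [kostka_zero_left]
  split_ifs <;> rfl

lemma toLex_le_of_kostka_ne_zero {φ m : ℕ →₀ ℕ} (hφ : Antitone φ) (h : kostka φ m ≠ 0) :
    toLex m ≤ toLex φ :=
  Finsupp.toLex_le_of_sum_range_le ((Set.nonempty_of_ncard_ne_zero h).choose_spec.sum_range_le hφ)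

lemma linearIndepOn_schurSeries : LinearIndepOn ℤ schurSeries {φ | Antitone φ} := by
  rw [linearIndepOn_iff]
  intro l hl hsum
  by_contra hne
  obtain ⟨φ₀, hφ₀, hmax⟩ :=
    l.support.exists_max_image toLex (Finsupp.support_nonempty_iff.mpr hne)
  -- `x ^ φ₀`, for `φ₀` the lexicographically largest shape of `l`, occurs in no other term
  have hcoeff := congrArg (MvPowerSeries.coeff φ₀) hsum
  rw [Finsupp.linearCombination_apply, Finsupp.sum, map_sum, map_zero,
    sum_eq_single φ₀ (fun φ hφ hφne => ?_) (fun h => (h hφ₀).elim), map_zsmul,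
    coeff_schurSeries, kostka_self ((Finsupp.mem_supported _ _).mp hl hφ₀)] at hcoeff
  · exact Finsupp.mem_support_iff.mp hφ₀ (by simpa using hcoeff)
  · have hlt : toLex φ < toLex φ₀ := lt_of_le_of_ne (hmax φ hφ) (toLex.injective.ne hφne)
    rw [map_zsmul, coeff_schurSeries, smul_eq_mul, mul_eq_zero, Nat.cast_eq_zero]
    by_contra! h
    exact hlt.not_ge (toLex_le_of_kostka_ne_zero ((Finsupp.mem_supported _ _).mp hl hφ) h.2)

/-! ### Horizontal strips and removal of the largest entry -/

/-- `κ / π` is a horizontal strip. -/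
def IsHorizontalStrip (π κ : ℕ →₀ ℕ) : Prop := π ≤ κ ∧ ∀ i, κ (i + 1) ≤ π i

lemma IsHorizontalStrip.antitone_left {π κ : ℕ →₀ ℕ} (h : IsHorizontalStrip π κ) : Antitone π :=
  antitone_nat_of_succ_le fun i => (h.1 (i + 1)).trans (h.2 i)

lemma IsHorizontalStrip.antitone_right {π κ : ℕ →₀ ℕ} (h : IsHorizontalStrip π κ) : Antitone κ :=
  antitone_nat_of_succ_le fun i => (h.2 i).trans (h.1 i)

lemma isHorizontalStrip_zero_right {ν : ℕ →₀ ℕ} : IsHorizontalStrip ν 0 ↔ ν = 0 :=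
  ⟨fun h => Finsupp.ext fun i => Nat.eq_zero_of_le_zero (h.1 i), by
    rintro rfl
    exact ⟨le_rfl, fun _ => le_rfl⟩⟩

noncomputable def stripsBelow (κ : ℕ →₀ ℕ) (t : ℕ) : Finset (ℕ →₀ ℕ) :=
  {π ∈ Iic κ | IsHorizontalStrip π κ ∧ degree π + t = degree κ}

noncomputable def stripsAbove (ν : ℕ →₀ ℕ) (N : ℕ) : Finset (ℕ →₀ ℕ) :=
  {κ ∈ partitionsOf N | IsHorizontalStrip ν κ}

lemma mem_stripsBelow {κ π : ℕ →₀ ℕ} {t : ℕ} :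
    π ∈ stripsBelow κ t ↔ IsHorizontalStrip π κ ∧ degree π + t = degree κ := by
  rw [stripsBelow, mem_filter, mem_Iic, and_iff_right_of_imp fun h => h.1.1]

lemma mem_stripsAbove {ν κ : ℕ →₀ ℕ} {N : ℕ} :
    κ ∈ stripsAbove ν N ↔ IsHorizontalStrip ν κ ∧ degree κ = N := by
  rw [stripsAbove, mem_filter, mem_partitionsOf]
  exact ⟨fun ⟨⟨_, h⟩, hs⟩ => ⟨hs, h⟩, fun ⟨hs, h⟩ => ⟨⟨hs.antitone_right, h⟩, hs⟩⟩

lemma stripsAbove_subset_partitionsOf (ν : ℕ →₀ ℕ) (N : ℕ) : stripsAbove ν N ⊆ partitionsOf N :=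
  filter_subset _ _

noncomputable def lowerShape (κ : ℕ →₀ ℕ) (T : ℕ → ℕ → ℕ) (n : ℕ) : ℕ →₀ ℕ :=
  Finsupp.onFinset κ.support (fun i => #{j ∈ range (κ i) | T i j < n}) fun i hi => by
    rw [Finsupp.mem_support_iff]
    intro h
    simp [h] at hi

lemma lowerShape_apply (κ : ℕ →₀ ℕ) (T : ℕ → ℕ → ℕ) (n i : ℕ) :
    lowerShape κ T n i = #{j ∈ range (κ i) | T i j < n} := rfl

def lowerPart (T : ℕ → ℕ → ℕ) (n : ℕ) : ℕ → ℕ → ℕ := fun i j => if T i j < n then T i j else 0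

lemma lowerPart_of_lt {T : ℕ → ℕ → ℕ} {n i j : ℕ} (h : T i j < n) : lowerPart T n i j = T i j :=
  if_pos h

lemma lowerPart_of_le {T : ℕ → ℕ → ℕ} {n i j : ℕ} (h : n ≤ T i j) : lowerPart T n i j = 0 :=
  if_neg (not_lt.mpr h)

def extendByValue (π κ : ℕ →₀ ℕ) (T : ℕ → ℕ → ℕ) (n : ℕ) : ℕ → ℕ → ℕ :=
  fun i j => if j < π i then T i j else if j < κ i then n else 0

section extendByValue

variable {π κ : ℕ →₀ ℕ} {T : ℕ → ℕ → ℕ} {n i j : ℕ}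

lemma extendByValue_of_lt (h : j < π i) : extendByValue π κ T n i j = T i j := if_pos h

lemma extendByValue_of_le_of_lt (h₁ : π i ≤ j) (h₂ : j < κ i) :
    extendByValue π κ T n i j = n := by
  rw [extendByValue, if_neg (not_lt.mpr h₁), if_pos h₂]

lemma extendByValue_of_le (h₁ : π i ≤ j) (h₂ : κ i ≤ j) : extendByValue π κ T n i j = 0 := by
  rw [extendByValue, if_neg (not_lt.mpr h₁), if_neg (not_lt.mpr h₂)]

end extendByValue

section Peel

variable {κ π m : ℕ →₀ ℕ} {n t : ℕ} {T : ℕ → ℕ → ℕ}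

namespace IsSSYT

lemma lt_lowerShape_iff (hT : IsSSYT κ m T) {i j : ℕ} :
    j < lowerShape κ T n i ↔ j < κ i ∧ T i j < n := by
  have h := filter_range_eq_range_card (P := fun j => T i j < n) (k := κ i)
    fun _ _ hjj hj' hlt => (hT.row_mono hjj hj').trans_lt hlt
  rw [lowerShape_apply, ← mem_range, ← h, mem_filter, mem_range]

lemma shapeCells_lowerShape (hT : IsSSYT κ m T) :
    shapeCells (lowerShape κ T n) = {p ∈ shapeCells κ | T p.1 p.2 < n} := by
  ext p
  simp [hT.lt_lowerShape_iff]

lemma entry_le (hm : ∀ v, n ≤ v → m v = 0) (hT : IsSSYT κ (m + Finsupp.single n t) T)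
    {i j : ℕ} (h : j < κ i) : T i j ≤ n := by
  by_contra hlt
  have := hT.mem_support h
  rw [Finsupp.mem_support_iff, Finsupp.add_apply, hm _ (by omega),
    Finsupp.single_eq_of_ne (by omega), add_zero] at this
  exact this rfl

lemma entry_lt (hm : ∀ v, n ≤ v → m v = 0) (hT : IsSSYT π m T) {i j : ℕ} (h : j < π i) :
    T i j < n := by
  by_contra hle
  exact Finsupp.mem_support_iff.mp (hT.mem_support h) (hm _ (not_lt.mp hle))

lemma isHorizontalStrip_lowerShape (hκ : Antitone κ) (hm : ∀ v, n ≤ v → m v = 0)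
    (hT : IsSSYT κ (m + Finsupp.single n t) T) : IsHorizontalStrip (lowerShape κ T n) κ := by
  refine ⟨fun i => ?_, fun i => ?_⟩
  · rw [lowerShape_apply]
    exact (card_filter_le _ _).trans (card_range _).le
  · by_contra! h
    have hcol := hT.col_lt i _ h
    have := hT.entry_le hm h
    exact lt_irrefl _ (hT.lt_lowerShape_iff.mpr ⟨h.trans_le (hκ i.le_succ), by omega⟩)

lemma degree_lowerShape (hm : ∀ v, n ≤ v → m v = 0) (hT : IsSSYT κ (m + Finsupp.single n t) T) :
    degree (lowerShape κ T n) + t = degree κ := by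
  have hfilter : {p ∈ shapeCells κ | ¬ T p.1 p.2 < n} = {p ∈ shapeCells κ | T p.1 p.2 = n} :=
    filter_congr fun p hp => ⟨fun h => le_antisymm (hT.entry_le hm (mem_shapeCells.mp hp))
      (not_lt.mp h), fun h => h.not_lt⟩
  rw [← card_shapeCells, ← card_shapeCells, hT.shapeCells_lowerShape,
    ← card_filter_add_card_filter_not (s := shapeCells κ) (fun p => T p.1 p.2 < n), hfilter]
  congr 1
  rw [← tableauContent, hT.content_eq]
  simp [hm n le_rfl]

lemma isSSYT_lowerPart (hm : ∀ v, n ≤ v → m v = 0) (hT : IsSSYT κ (m + Finsupp.single n t) T) :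
    IsSSYT (lowerShape κ T n) m (lowerPart T n) where
  eq_zero i j h := by
    by_cases hlt : T i j < n
    · rw [lowerPart_of_lt hlt]
      exact hT.eq_zero i j (not_lt.mp fun hj => (not_lt.mpr h) (hT.lt_lowerShape_iff.mpr ⟨hj, hlt⟩))
    · exact lowerPart_of_le (not_lt.mp hlt)
  row_le i j h := by
    obtain ⟨h₁, h₂⟩ := hT.lt_lowerShape_iff.mp h
    have := hT.row_le i j h₁
    rwa [lowerPart_of_lt h₂, lowerPart_of_lt (this.trans_lt h₂)]
  col_lt i j h := by
    obtain ⟨h₁, h₂⟩ := hT.lt_lowerShape_iff.mp h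
    have := hT.col_lt i j h₁
    rwa [lowerPart_of_lt h₂, lowerPart_of_lt (this.trans h₂)]
  content_eq v := by
    rw [tableauContent, hT.shapeCells_lowerShape, filter_filter,
      filter_congr fun p _ => and_congr_right fun h => by rw [lowerPart_of_lt h]]
    by_cases hv : v < n
    · rw [filter_congr fun p _ => ⟨And.right, fun h => ⟨h ▸ hv, h⟩⟩, ← tableauContent,
        hT.content_eq]
      simp [Finsupp.single_eq_of_ne hv.ne]
    · rw [hm v (not_lt.mp hv), card_eq_zero, filter_eq_empty_iff]
      rintro p - ⟨h₁, rfl⟩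
      exact hv h₁

lemma filter_extendByValue_eq_sdiff (hm : ∀ v, n ≤ v → m v = 0) (hT : IsSSYT π m T) :
    {p ∈ shapeCells κ | extendByValue π κ T n p.1 p.2 = n} = shapeCells κ \ shapeCells π := by
  ext p
  rw [mem_filter, mem_sdiff, mem_shapeCells, mem_shapeCells]
  constructor
  · rintro ⟨h₁, h₂⟩
    refine ⟨h₁, fun h₃ => ?_⟩
    rw [extendByValue_of_lt h₃] at h₂
    exact (hT.entry_lt hm h₃).ne h₂
  · rintro ⟨h₁, h₂⟩
    exact ⟨h₁, extendByValue_of_le_of_lt (not_lt.mp h₂) h₁⟩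

lemma filter_extendByValue_eq_of_ne (hπκ : π ≤ κ) {v : ℕ} (hv : v ≠ n) :
    {p ∈ shapeCells κ | extendByValue π κ T n p.1 p.2 = v}
      = {p ∈ shapeCells π | T p.1 p.2 = v} := by
  ext p
  rw [mem_filter, mem_filter, mem_shapeCells, mem_shapeCells]
  constructor
  · rintro ⟨h₁, h₂⟩
    by_cases h₃ : p.2 < π p.1
    · rw [extendByValue_of_lt h₃] at h₂
      exact ⟨h₃, h₂⟩
    · rw [extendByValue_of_le_of_lt (not_lt.mp h₃) h₁] at h₂
      exact absurd h₂.symm hv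
  · rintro ⟨h₁, h₂⟩
    rw [extendByValue_of_lt h₁]
    exact ⟨h₁.trans_le (hπκ p.1), h₂⟩

lemma isSSYT_extendByValue (hm : ∀ v, n ≤ v → m v = 0) (hπ : π ∈ stripsBelow κ t)
    (hT : IsSSYT π m T) : IsSSYT κ (m + Finsupp.single n t) (extendByValue π κ T n) where
  eq_zero i j h :=
    extendByValue_of_le (((mem_stripsBelow.mp hπ).1.1 i).trans h) h
  row_le i j h := by
    by_cases h₁ : j + 1 < π i
    · rw [extendByValue_of_lt (by omega), extendByValue_of_lt h₁]
      exact hT.row_le i j h₁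
    · rw [extendByValue_of_le_of_lt (not_lt.mp h₁) h]
      by_cases h₂ : j < π i
      · rw [extendByValue_of_lt h₂]
        exact (hT.entry_lt hm h₂).le
      · rw [extendByValue_of_le_of_lt (not_lt.mp h₂) (by omega)]
  col_lt i j h := by
    have hj : j < π i := h.trans_le ((mem_stripsBelow.mp hπ).1.2 i)
    rw [extendByValue_of_lt hj]
    by_cases h₁ : j < π (i + 1)
    · rw [extendByValue_of_lt h₁]
      exact hT.col_lt i j h₁
    · rw [extendByValue_of_le_of_lt (not_lt.mp h₁) h]
      exact hT.entry_lt hm hj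
  content_eq v := by
    obtain ⟨hstrip, hdeg⟩ := mem_stripsBelow.mp hπ
    rw [tableauContent]
    by_cases hv : v = n
    · subst hv
      rw [hT.filter_extendByValue_eq_sdiff hm, card_sdiff_of_subset (shapeCells_mono hstrip.1),
        card_shapeCells, card_shapeCells]
      simp [hm v le_rfl]
      omega
    · rw [filter_extendByValue_eq_of_ne hstrip.1 hv, ← tableauContent, hT.content_eq,
        Finsupp.add_apply, Finsupp.single_eq_of_ne hv, add_zero]

lemma lowerShape_extendByValue (hm : ∀ v, n ≤ v → m v = 0) (hπκ : π ≤ κ)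
    (hT : IsSSYT π m T) : lowerShape κ (extendByValue π κ T n) n = π := by
  ext i
  rw [lowerShape_apply, ← card_range (π i)]
  congr 1
  ext j
  rw [mem_filter, mem_range, mem_range]
  constructor
  · rintro ⟨hj, hlt⟩
    by_contra! h
    rw [extendByValue_of_le_of_lt h hj] at hlt
    exact lt_irrefl n hlt
  · intro hj
    rw [extendByValue_of_lt hj]
    exact ⟨hj.trans_le (hπκ i), hT.entry_lt hm hj⟩

lemma lowerPart_extendByValue (hm : ∀ v, n ≤ v → m v = 0) (hT : IsSSYT π m T) :
    lowerPart (extendByValue π κ T n) n = T := by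
  funext i j
  by_cases h₁ : j < π i
  · rw [lowerPart_of_lt (by rw [extendByValue_of_lt h₁]; exact hT.entry_lt hm h₁),
      extendByValue_of_lt h₁]
  · rw [hT.eq_zero i j (not_lt.mp h₁)]
    by_cases h₂ : j < κ i
    · exact lowerPart_of_le (extendByValue_of_le_of_lt (not_lt.mp h₁) h₂).ge
    · rw [lowerPart, extendByValue_of_le (not_lt.mp h₁) (not_lt.mp h₂)]
      exact ite_self 0

lemma extendByValue_lowerPart (hm : ∀ v, n ≤ v → m v = 0)
    (hT : IsSSYT κ (m + Finsupp.single n t) T) :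
    extendByValue (lowerShape κ T n) κ (lowerPart T n) n = T := by
  funext i j
  by_cases h₁ : j < lowerShape κ T n i
  · obtain ⟨-, h₂⟩ := hT.lt_lowerShape_iff.mp h₁
    rw [extendByValue_of_lt h₁, lowerPart_of_lt h₂]
  · by_cases h₂ : j < κ i
    · have := hT.entry_le hm h₂
      have : ¬ T i j < n := fun h => h₁ (hT.lt_lowerShape_iff.mpr ⟨h₂, h⟩)
      rw [extendByValue_of_le_of_lt (not_lt.mp h₁) h₂]
      omega
    · rw [extendByValue_of_le (not_lt.mp h₁) (not_lt.mp h₂), hT.eq_zero i j (not_lt.mp h₂)]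

end IsSSYT

/-- Deleting the entries equal to the largest value `n` of a tableau of shape `κ` leaves a tableau
of a shape `π` with `κ / π` a horizontal strip; conversely, filling such a strip with `n`
extends any tableau of shape `π`. -/
noncomputable def peelEquiv {κ m : ℕ →₀ ℕ} {n t : ℕ} (hκ : Antitone κ)
    (hm : ∀ v, n ≤ v → m v = 0) :
    {T // IsSSYT κ (m + Finsupp.single n t) T} ≃ Σ π : stripsBelow κ t, {T // IsSSYT π m T} where
  toFun T := ⟨⟨lowerShape κ T n, mem_stripsBelow.mpr
      ⟨T.2.isHorizontalStrip_lowerShape hκ hm, T.2.degree_lowerShape hm⟩⟩,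
    ⟨lowerPart T n, T.2.isSSYT_lowerPart hm⟩⟩
  invFun x := ⟨extendByValue x.1 κ x.2 n, x.2.2.isSSYT_extendByValue hm x.1.2⟩
  left_inv T := Subtype.ext (T.2.extendByValue_lowerPart hm)
  right_inv x := Sigma.subtype_ext
    (Subtype.ext (x.2.2.lowerShape_extendByValue hm (mem_stripsBelow.mp x.1.2).1.1))
    (x.2.2.lowerPart_extendByValue hm)

lemma kostka_add_single {κ m : ℕ →₀ ℕ} {n t : ℕ} (hκ : Antitone κ)
    (hm : ∀ v, n ≤ v → m v = 0) :
    kostka κ (m + Finsupp.single n t) = ∑ π ∈ stripsBelow κ t, kostka π m := by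
  have (π : ℕ →₀ ℕ) : Finite {T | IsSSYT π m T} := (finite_setOf_isSSYT π m).to_subtype
  simp only [kostka, ← Nat.card_coe_set_eq]
  rw [← sum_coe_sort (stripsBelow κ t), ← Nat.card_sigma]
  exact Nat.card_congr (peelEquiv hκ hm)

end Peel

/-! ### Pieri's rule -/

lemma isHorizontalStrip_below_both_iff {τ ν π : ℕ →₀ ℕ} :
    IsHorizontalStrip τ ν ∧ IsHorizontalStrip τ π ↔ (ν ⊔ π).natTail ≤ τ ∧ τ ≤ ν ⊓ π := by
  simp only [IsHorizontalStrip, Finsupp.le_def, Finsupp.natTail_apply, Finsupp.sup_apply,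
    sup_le_iff, le_inf_iff]
  grind

lemma isHorizontalStrip_above_both_iff {ν π κ : ℕ →₀ ℕ} :
    IsHorizontalStrip ν κ ∧ IsHorizontalStrip π κ ↔
      (ν ⊔ π) 0 ≤ κ 0 ∧ (ν ⊔ π).natTail ≤ κ.natTail ∧ κ.natTail ≤ ν ⊓ π := by
  rw [← and_assoc, ← Finsupp.le_iff_apply_zero_le_and_natTail_le]
  simp only [IsHorizontalStrip, Finsupp.le_def, Finsupp.natTail_apply, sup_le_iff, le_inf_iff]
  grind

noncomputable def boxReflect (ν π x : ℕ →₀ ℕ) : ℕ →₀ ℕ := (ν ⊔ π).natTail + ν ⊓ π - x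

section boxReflect

variable {ν π x : ℕ →₀ ℕ}

lemma boxReflect_boxReflect (hx : x ≤ ν ⊓ π) : boxReflect ν π (boxReflect ν π x) = x :=
  tsub_tsub_cancel_of_le (hx.trans le_add_self)

lemma degree_boxReflect_add (hx : x ≤ ν ⊓ π) :
    degree (boxReflect ν π x) + degree x + (ν ⊔ π) 0 = degree ν + degree π := by
  rw [boxReflect, ← map_add, tsub_add_cancel_of_le (hx.trans le_add_self), map_add,
    ← Finsupp.degree_sup_add_degree_inf ν π, Finsupp.degree_eq_add_degree_natTail (ν ⊔ π)]
  ring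

lemma boxReflect_mem (h₁ : (ν ⊔ π).natTail ≤ x) (h₂ : x ≤ ν ⊓ π) :
    (ν ⊔ π).natTail ≤ boxReflect ν π x ∧ boxReflect ν π x ≤ ν ⊓ π := by
  simp only [boxReflect, Finsupp.le_def, Finsupp.tsub_apply, Finsupp.add_apply] at h₁ h₂ ⊢
  exact ⟨fun i => by have := h₁ i; have := h₂ i; omega, fun i => by have := h₁ i; omega⟩

end boxReflect

/-- By `isHorizontalStrip_below_both_iff` and `isHorizontalStrip_above_both_iff`, both sides
count points of the box `(ν ⊔ π).natTail ≤ x ≤ ν ⊓ π` (for `κ`, its rows after the first, which is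
determined by the degree), and `boxReflect` exchanges the two degree conditions. -/
lemma card_stripsBelow_both_eq_card_stripsAbove_both (ν π : ℕ →₀ ℕ) (t : ℕ) :
    #{τ ∈ Iic ν | IsHorizontalStrip τ ν ∧ IsHorizontalStrip τ π ∧ degree ν ≤ degree τ + t}
      = #{κ ∈ partitionsOf (degree π + t) | IsHorizontalStrip ν κ ∧ IsHorizontalStrip π κ} := by
  refine card_nbij'
    (fun τ => natCons (degree π + t - degree (boxReflect ν π τ)) (boxReflect ν π τ))
    (fun κ => boxReflect ν π κ.natTail) (fun τ hτ => ?_) (fun κ hκ => ?_) (fun τ hτ => ?_)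
    (fun κ hκ => ?_) <;> dsimp only
  · obtain ⟨-, hs₁, hs₂, hτdeg⟩ := mem_filter.mp hτ
    obtain ⟨hLτ, hτU⟩ := isHorizontalStrip_below_both_iff.mp ⟨hs₁, hs₂⟩
    have := degree_boxReflect_add hτU
    have hstrips := (isHorizontalStrip_above_both_iff (ν := ν) (π := π)
      (κ := natCons (degree π + t - degree (boxReflect ν π τ)) (boxReflect ν π τ))).mpr <| by
        rw [natCons_zero, natTail_natCons]
        exact ⟨by omega, boxReflect_mem hLτ hτU⟩
    rw [mem_coe, mem_filter, mem_partitionsOf, degree_natCons]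
    exact ⟨⟨hstrips.1.antitone_right, by omega⟩, hstrips⟩
  · rw [mem_coe, mem_filter, mem_partitionsOf] at hκ
    obtain ⟨⟨-, hκdeg⟩, hstrips⟩ := hκ
    obtain ⟨hκ₀, hLκ, hκU⟩ := isHorizontalStrip_above_both_iff.mp hstrips
    obtain ⟨hLτ, hτU⟩ := boxReflect_mem hLκ hκU
    have := degree_boxReflect_add hκU
    have := Finsupp.degree_eq_add_degree_natTail κ
    rw [mem_coe, mem_filter, mem_Iic]
    exact ⟨hτU.trans inf_le_left, isHorizontalStrip_below_both_iff.mpr ⟨hLτ, hτU⟩ |>.imp_right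
      fun h => ⟨h, by omega⟩⟩
  · obtain ⟨-, hs₁, hs₂, -⟩ := mem_filter.mp hτ
    rw [natTail_natCons,
      boxReflect_boxReflect (isHorizontalStrip_below_both_iff.mp ⟨hs₁, hs₂⟩).2]
  · rw [mem_coe, mem_filter, mem_partitionsOf] at hκ
    obtain ⟨⟨-, hκdeg⟩, hstrips⟩ := hκ
    rw [boxReflect_boxReflect (isHorizontalStrip_above_both_iff.mp hstrips).2.2, ← hκdeg,
      Finsupp.degree_eq_add_degree_natTail κ, Nat.add_sub_cancel, natCons_natTail]

lemma sum_range_sum_stripsBelow {M : Type*} [AddCommMonoid M] (ν : ℕ →₀ ℕ) (t : ℕ)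
    (g : (ℕ →₀ ℕ) → M) :
    ∑ s ∈ range (t + 1), ∑ τ ∈ stripsBelow ν s, g τ
      = ∑ τ ∈ Iic ν with IsHorizontalStrip τ ν ∧ degree ν ≤ degree τ + t, g τ := by
  rw [← sum_fiberwise_of_maps_to (g := fun τ => degree ν - degree τ) (t := range (t + 1))
    fun τ hτ => by rw [mem_filter] at hτ; rw [mem_range]; omega]
  refine sum_congr rfl fun s hs => sum_congr ?_ fun _ _ => rfl
  ext τ
  rw [mem_range] at hs
  simp only [mem_filter, mem_stripsBelow, mem_Iic]
  constructor
  · rintro ⟨hstrip, hdeg⟩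
    exact ⟨⟨hstrip.1, hstrip, by omega⟩, by omega⟩
  · rintro ⟨⟨-, hstrip, -⟩, rfl⟩
    have := Finsupp.degree_mono hstrip.1
    exact ⟨hstrip, by omega⟩

lemma stripsAbove_zero (ν : ℕ →₀ ℕ) : stripsAbove ν 0 = if ν = 0 then {0} else ∅ := by
  ext κ
  rw [mem_stripsAbove, Finsupp.degree_eq_zero_iff]
  constructor
  · rintro ⟨hs, rfl⟩
    simp [isHorizontalStrip_zero_right.mp hs]
  · intro h
    split_ifs at h with hν
    · rw [mem_singleton] at h
      exact ⟨by rw [h]; exact isHorizontalStrip_zero_right.mpr hν, h⟩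
    · exact absurd h (notMem_empty κ)

lemma card_filter_mem_stripsAbove_eq_card_filter_mem_stripsBelow (ν π : ℕ →₀ ℕ) (t : ℕ) :
    #{τ ∈ {τ ∈ Iic ν | IsHorizontalStrip τ ν ∧ degree ν ≤ degree τ + t} |
        π ∈ stripsAbove τ (degree π)}
      = #{κ ∈ stripsAbove ν (degree π + t) | π ∈ stripsBelow κ t} := by
  rw [filter_filter, stripsAbove, filter_filter]
  convert card_stripsBelow_both_eq_card_stripsAbove_both ν π t using 2
  · refine filter_congr fun τ _ => ?_
    rw [mem_stripsAbove]
    tauto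
  · refine filter_congr fun κ hκ => ?_
    rw [mem_stripsBelow, (mem_partitionsOf.mp hκ).2]
    tauto

lemma sum_Iic_add_single_kostka {ν m : ℕ →₀ ℕ} {n : ℕ} (hν : Antitone ν)
    (hm : ∀ v, n ≤ v → m v = 0) (t : ℕ) :
    ∑ a ∈ Iic (m + Finsupp.single n t), kostka ν a
      = ∑ τ ∈ Iic ν with IsHorizontalStrip τ ν ∧ degree ν ≤ degree τ + t,
          ∑ a ∈ Iic m, kostka τ a := by
  rw [Finsupp.sum_Iic_add_single (hm n le_rfl), ← sum_range_sum_stripsBelow]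
  refine sum_congr rfl fun s _ => ?_
  rw [sum_comm]
  exact sum_congr rfl fun a ha => kostka_add_single hν fun v hv =>
    Nat.eq_zero_of_le_zero (hm v hv ▸ mem_Iic.mp ha v)

lemma sum_stripsAbove_kostka_add_single {ν m : ℕ →₀ ℕ} {n : ℕ} (hm : ∀ v, n ≤ v → m v = 0)
    (t : ℕ) :
    ∑ κ ∈ stripsAbove ν (degree m + t), kostka κ (m + Finsupp.single n t)
      = ∑ π ∈ partitionsOf (degree m),
          #{κ ∈ stripsAbove ν (degree m + t) | π ∈ stripsBelow κ t} • kostka π m := by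
  rw [← sum_sum_eq_sum_card_filter_smul (u := fun κ => stripsBelow κ t) fun κ hκ π hπ => ?_]
  · exact sum_congr rfl fun κ hκ =>
      kostka_add_single (mem_stripsAbove.mp hκ).1.antitone_right hm
  · rw [mem_stripsBelow] at hπ
    rw [mem_stripsAbove] at hκ
    exact mem_partitionsOf.mpr ⟨hπ.1.antitone_left, by omega⟩

/-- Pieri's rule in coefficient form: the left side is the coefficient of `x ^ m` in
`s_ν * ∑ r, h_r`. The induction is on the number `n` of variables. -/
lemma sum_Iic_kostka_eq_sum_stripsAbove (n : ℕ) :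
    ∀ {m : ℕ →₀ ℕ}, (∀ v, n ≤ v → m v = 0) → ∀ {ν : ℕ →₀ ℕ}, Antitone ν →
      ∑ a ∈ Iic m, kostka ν a = ∑ κ ∈ stripsAbove ν (degree m), kostka κ m := by
  induction n with
  | zero =>
    intro m hm ν _
    obtain rfl : m = 0 := Finsupp.ext fun v => hm v v.zero_le
    rw [map_zero, stripsAbove_zero, ← bot_eq_zero, Iic_bot, sum_singleton, bot_eq_zero,
      kostka_zero_right]
    split_ifs <;> simp [kostka_self Finsupp.antitone_zero]
  | succ n ih =>
    intro m hm ν hν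
    obtain ⟨m, hm', t, rfl⟩ : ∃ m', (∀ v, n ≤ v → m' v = 0) ∧ ∃ t, m = m' + Finsupp.single n t :=
      ⟨m.erase n, fun v hv => by
        rcases hv.eq_or_lt with rfl | hlt
        · exact Finsupp.erase_same
        · rw [Finsupp.erase_ne hlt.ne', hm v hlt], m n, (Finsupp.erase_add_single n m).symm⟩
    rw [sum_Iic_add_single_kostka hν hm', map_add, Finsupp.degree_single,
      sum_stripsAbove_kostka_add_single hm',
      sum_congr rfl fun τ hτ => ih hm' (mem_filter.mp hτ).2.1.antitone_left,
      sum_sum_eq_sum_card_filter_smul fun τ _ => stripsAbove_subset_partitionsOf τ (degree m)]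
    refine sum_congr rfl fun π hπ => ?_
    rw [← (mem_partitionsOf.mp hπ).2, card_filter_mem_stripsAbove_eq_card_filter_mem_stripsBelow]

lemma coeff_hN (N : ℕ) (m : ℕ →₀ ℕ) :
    MvPowerSeries.coeff m (hN N) = if degree m = N then 1 else 0 := rfl

lemma schurSeries_mul_hN {ν : ℕ →₀ ℕ} (hν : Antitone ν) (r : ℕ) :
    schurSeries ν * hN r = ∑ κ ∈ stripsAbove ν (degree ν + r), schurSeries κ := by
  ext m
  rw [MvPowerSeries.coeff_mul, map_sum]
  simp only [coeff_schurSeries, coeff_hN, mul_ite, mul_one, mul_zero]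
  have hterm : ∀ p ∈ antidiagonal m, (if degree p.2 = r then (kostka ν p.1 : ℤ) else 0)
      = if degree m = degree ν + r then (kostka ν p.1 : ℤ) else 0 := fun p hp => by
    by_cases hk : kostka ν p.1 = 0
    · simp [hk]
    · have := degree_eq_of_kostka_ne_zero hk
      have : degree p.1 + degree p.2 = degree m := by
        rw [← map_add, HasAntidiagonal.mem_antidiagonal.mp hp]
      exact if_congr (by omega) rfl rfl
  rw [sum_congr rfl hterm]
  split_ifs with hdeg
  · obtain ⟨n, hn⟩ := m.support.exists_nat_subset_range
    have hm : ∀ v, n ≤ v → m v = 0 := fun v hv => Finsupp.notMem_support_iff.mp fun h => by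
      have := mem_range.mp (hn h)
      omega
    rw [← hdeg, ← Nat.cast_sum, Finsupp.sum_antidiagonal_eq_sum_Iic m (kostka ν),
      sum_Iic_kostka_eq_sum_stripsAbove n hm hν, Nat.cast_sum]
  · rw [sum_const_zero, eq_comm]
    refine sum_eq_zero fun κ hκ => ?_
    rw [Nat.cast_eq_zero]
    by_contra hk
    exact hdeg ((degree_eq_of_kostka_ne_zero hk).trans (mem_stripsAbove.mp hκ).2)

/-! ### The Schur expansion of `h_μ` -/

lemma hProd_eq_sum_kostka (μ : List ℕ) :
    hProd μ = ∑ φ ∈ partitionsOf μ.sum, (kostka φ μ.toFinsupp : ℤ) • schurSeries φ := by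
  induction μ using List.reverseRecOn with
  | nil =>
    simp [hProd, partitionsOf_zero, kostka_self Finsupp.antitone_zero, schurSeries_zero]
  | append_singleton μ r ih =>
    have hμ : ∀ v, μ.length ≤ v → μ.toFinsupp v = 0 := fun v hv => List.toFinsupp_apply_le _ _ hv
    rw [hProd, List.map_append, List.prod_append, ← hProd, ih, List.map_singleton,
      List.prod_singleton, sum_mul, List.sum_append, List.sum_singleton,
      List.toFinsupp_concat_eq_toFinsupp_add_single]
    calc ∑ φ ∈ partitionsOf μ.sum, ((kostka φ μ.toFinsupp : ℤ) • schurSeries φ) * hN r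
        = ∑ φ ∈ partitionsOf μ.sum, ∑ κ ∈ stripsAbove φ (μ.sum + r),
            (kostka φ μ.toFinsupp : ℤ) • schurSeries κ := by
          refine sum_congr rfl fun φ hφ => ?_
          obtain ⟨hφ, hdeg⟩ := mem_partitionsOf.mp hφ
          rw [smul_mul_assoc, schurSeries_mul_hN hφ, hdeg, smul_sum]
      _ = ∑ κ ∈ partitionsOf (μ.sum + r), ∑ φ ∈ stripsBelow κ r,
            (kostka φ μ.toFinsupp : ℤ) • schurSeries κ := by
          refine sum_comm' fun φ κ => ?_
          rw [mem_stripsAbove, mem_stripsBelow, mem_partitionsOf, mem_partitionsOf]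
          constructor
          · rintro ⟨⟨-, hφ⟩, hs, hκ⟩
            exact ⟨⟨hs, by omega⟩, hs.antitone_right, hκ⟩
          · rintro ⟨⟨hs, hdeg⟩, -, hκ⟩
            exact ⟨⟨hs.antitone_left, by omega⟩, hs, hκ⟩
      _ = _ := by
          refine sum_congr rfl fun κ hκ => ?_
          rw [← sum_smul, kostka_add_single (mem_partitionsOf.mp hκ).1 hμ, Nat.cast_sum]

lemma tableauContent_eq_sum_range {φ : ℕ →₀ ℕ} {L : ℕ} (hL : ∀ i, L ≤ i → φ i = 0)
    (T : ℕ → ℕ → ℕ) (v : ℕ) :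
    tableauContent φ T v = ∑ i ∈ range L, #{j ∈ range (φ i) | T i j = v} := by
  rw [tableauContent, card_eq_sum_card_fiberwise (f := Prod.fst) (t := range L) fun p hp => by
    rw [mem_coe, mem_filter, mem_shapeCells] at hp
    rw [mem_coe, mem_range]
    by_contra h
    rw [hL _ (not_lt.mp h)] at hp
    omega]
  refine sum_congr rfl fun i _ => ?_
  have h := card_filter_shapeCells_fst_eq φ i fun p => T p.1 p.2 = v
  rw [← h, filter_filter]
  congr 1
  exact filter_congr fun p _ => and_comm

lemma skewCell_nil_iff {l : List ℕ} {i j : ℕ} : SkewCell l [] i j ↔ j < l.toFinsupp i := by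
  rw [SkewCell, List.toFinsupp_apply, List.getD_nil]
  refine ⟨fun h => h.2.2, fun h => ⟨?_, Nat.zero_le _, h⟩⟩
  by_contra hi
  rw [List.getD_eq_default _ _ (not_lt.mp hi)] at h
  omega

lemma skewContent_nil (l : List ℕ) (T : ℕ → ℕ → ℕ) (v : ℕ) :
    skewContent l [] T v = tableauContent l.toFinsupp T v := by
  rw [skewContent, tableauContent_eq_sum_range fun i hi => List.toFinsupp_apply_le _ _ hi]
  simp only [List.getD_nil, List.toFinsupp_apply, ← range_eq_Ico]

lemma schurFn_eq_schurSeries {l : List ℕ} (hl : Antitone l.toFinsupp) :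
    schurFn l = schurSeries l.toFinsupp := by
  ext m
  show (Set.ncard _ : ℤ) = (kostka _ m : ℤ)
  congr 2
  ext T
  simp only [Set.mem_ofPred_eq, IsSkewSSYT, skewCell_nil_iff, skewContent_nil]
  constructor
  · rintro ⟨⟨h₀, hrow, hcol⟩, hc⟩
    exact ⟨fun i j h => h₀ i j (not_lt.mpr h), fun i j h => hrow i j (by omega) h,
      fun i j h => hcol i j (h.trans_le (hl i.le_succ)) h, hc⟩
  · rintro ⟨h₀, hrow, hcol, hc⟩
    exact ⟨⟨fun i j h => h₀ i j (not_lt.mp h), fun i j _ h => hrow i j h,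
      fun i j _ h => hcol i j h⟩, hc⟩

noncomputable def kostkaColumn (m : ℕ →₀ ℕ) : (ℕ →₀ ℕ) →₀ ℤ :=
  ∑ φ ∈ partitionsOf (degree m), Finsupp.single φ (kostka φ m : ℤ)

lemma kostkaColumn_apply {φ : ℕ →₀ ℕ} (hφ : Antitone φ) (m : ℕ →₀ ℕ) :
    kostkaColumn m φ = kostka φ m := by
  rw [kostkaColumn, Finsupp.finsetSum_apply]
  refine (sum_eq_single φ (fun ψ _ h => Finsupp.single_eq_of_ne h.symm) fun hφm => ?_).trans
    Finsupp.single_eq_same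
  rw [Finsupp.single_eq_same, Nat.cast_eq_zero]
  by_contra hk
  exact hφm (mem_partitionsOf.mpr ⟨hφ, (degree_eq_of_kostka_ne_zero hk).symm⟩)

lemma kostkaColumn_self {φ : ℕ →₀ ℕ} (hφ : Antitone φ) : kostkaColumn φ φ = 1 := by
  rw [kostkaColumn_apply hφ, kostka_self hφ, Nat.cast_one]

lemma kostkaColumn_eq_zero_of_toLex_lt {φ m : ℕ →₀ ℕ} (hφ : Antitone φ) (h : toLex φ < toLex m) :
    kostkaColumn m φ = 0 := by
  rw [kostkaColumn_apply hφ, Nat.cast_eq_zero]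
  by_contra hk
  exact (toLex_le_of_kostka_ne_zero hφ hk).not_gt h

lemma kostkaColumn_mem_supported (m : ℕ →₀ ℕ) :
    kostkaColumn m ∈ Finsupp.supported ℤ ℤ {φ : ℕ →₀ ℕ | Antitone φ} :=
  sum_mem fun _ hφ => Finsupp.single_mem_supported ℤ _ (mem_partitionsOf.mp hφ).1

lemma linearCombination_kostkaColumn (μ : List ℕ) :
    Finsupp.linearCombination ℤ schurSeries (kostkaColumn μ.toFinsupp) = hProd μ := by
  rw [hProd_eq_sum_kostka, kostkaColumn, map_sum, List.degree_toFinsupp]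
  simp only [Finsupp.linearCombination_single]

lemma SchurPos.exists_schurSeries_coeffs {f : MvPowerSeries ℕ ℤ} (hf : SchurPos f) :
    ∃ b ∈ Finsupp.supported ℤ ℤ {φ : ℕ →₀ ℕ | Antitone φ},
      (∀ φ, 0 ≤ b φ) ∧ Finsupp.linearCombination ℤ schurSeries b = f := by
  obtain ⟨d, hd, rfl⟩ := hf
  have hd' (μ : List ℕ) (hμ : d μ ≠ 0) : Antitone μ.toFinsupp :=
    List.antitone_toFinsupp (hd μ (Finsupp.mem_support_iff.mpr hμ)).1
  refine ⟨d.sum fun μ n => Finsupp.single μ.toFinsupp (n : ℤ),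
    Submodule.finsuppSum_mem _ _ _ _ fun μ hμ => Finsupp.single_mem_supported ℤ _ (hd' μ hμ),
    fun φ => ?_, ?_⟩
  · rw [Finsupp.sum_apply]
    refine sum_nonneg fun μ _ => ?_
    dsimp only
    rw [Finsupp.single_apply]
    split_ifs <;> positivity
  · simp only [map_finsuppSum, Finsupp.linearCombination_single]
    exact Finsupp.sum_congr fun μ hμ => by
      rw [schurFn_eq_schurSeries (hd' μ (Finsupp.mem_support_iff.mp hμ))]

end SchurExpansion

/-- if `f = c_λ h_λ + ∑_{μ >_lex λ} c_μ h_μ` with `c_λ ≠ 0` (so `f ≠ 0`,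
homogeneous) and `f` is Schur-positive, then `c_λ > 0`. -/
theorem lex_least_coeff_pos (f : MvPowerSeries ℕ ℤ) (lam : List ℕ) (clam : ℤ)
    (hlam : IsPartitionList lam) (hclam : clam ≠ 0) (c : List ℕ →₀ ℤ)
    (hsupp : ∀ μ ∈ c.support, IsPartitionList μ ∧ μ.sum = lam.sum ∧ LexLt lam μ)
    (hf : f = clam • hProd lam + c.sum fun μ n => n • hProd μ)
    (hpos : SchurPos f) :
    0 < clam := by
  obtain ⟨b, hb, hb_nonneg, hbf⟩ := hpos.exists_schurSeries_coeffs
  set a := clam • kostkaColumn lam.toFinsupp + c.sum fun μ z => z • kostkaColumn μ.toFinsupp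
  have ha : a ∈ Finsupp.supported ℤ ℤ {φ : ℕ →₀ ℕ | Antitone φ} :=
    add_mem (Submodule.smul_mem _ _ (kostkaColumn_mem_supported _))
      (Submodule.finsuppSum_mem _ _ _ _ fun _ _ =>
        Submodule.smul_mem _ _ (kostkaColumn_mem_supported _))
  have haf : Finsupp.linearCombination ℤ schurSeries a = f := by
    simp only [a, hf, map_add, map_smul, map_finsuppSum, linearCombination_kostkaColumn]
  have hab : a = b := linearIndepOn_iffₛ.mp linearIndepOn_schurSeries a ha b hb (haf.trans hbf.symm)
  have hlam' := List.antitone_toFinsupp hlam.1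
  have ha_lam : a lam.toFinsupp = clam := by
    rw [Finsupp.add_apply, Finsupp.smul_apply, kostkaColumn_self hlam', Finsupp.sum_apply,
      Finsupp.sum, sum_eq_zero fun μ hμ => by
        rw [Finsupp.smul_apply, kostkaColumn_eq_zero_of_toLex_lt hlam' (hsupp μ hμ).2.2.toLex_lt,
          smul_zero]]
    simp
  have := hb_nonneg lam.toFinsupp
  rw [← hab, ha_lam] at this
  omega
end

section
/- For a composition alpha, the ribbon Schur function satisfies r_alpha = (-1)^{l(alpha)} * sum over coarsenings beta of alpha of (-1)^{l(beta)} h_{lambda(beta)}, where the sum is over all compositions beta obtained by adding together adjacent parts of alpha, lambda(beta) is the partition obtained by sorting beta, and h denotes products of complete homogeneous symmetric functions. -/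
/-
Peel off the top row `a` of the ribbon of `a :: γ`. Fillings of that ribbon which are semistandard
except for the one column where the top row meets the next are pairs (weakly increasing row,
semistandard filling of the ribbon of `γ`), so they are counted by `h_a r_γ`. For `γ = g :: gs`
they split according to that column condition: where it holds we have a filling counted by
`r_{a :: g :: gs}`, where it fails the two top rows glue to a weakly increasing row of length
`a + g`, bijectively giving the fillings counted by `r_{(a + g) :: gs}`. Hence
`h_a r_{g :: gs} = r_{a :: g :: gs} + r_{(a + g) :: gs}`, and `r_{[a]} = h_a`. Sorting the
coarsenings of `a :: g :: gs` by whether `a` is a part of its own shows that the signed sum of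
coarsenings satisfies the same recursion, and the theorem follows by induction on the length.
-/

open scoped BigOperators

lemma IsCompositionList.cons {a : ℕ} {l : List ℕ} (hl : IsCompositionList l) (ha : 0 < a) :
    IsCompositionList (a :: l) :=
  List.forall_mem_cons.mpr ⟨ha, hl⟩

lemma IsCompositionList.length_le_sum {δ : List ℕ} (hδ : IsCompositionList δ) :
    δ.length ≤ δ.sum := by
  simpa using List.length_le_sum_of_one_le δ hδ

lemma Finsupp.exists_add_eq_of_forall_add_eq {α : Type*} {m : α →₀ ℕ} {f g : α → ℕ}
    (h : ∀ v, f v + g v = m v) : ∃ p : (α →₀ ℕ) × (α →₀ ℕ), p.1 + p.2 = m ∧ ⇑p.1 = f ∧ ⇑p.2 = g :=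
  ⟨(Finsupp.onFinset m.support f fun v hv => Finsupp.mem_support_iff.mpr (by grind),
    Finsupp.onFinset m.support g fun v hv => Finsupp.mem_support_iff.mpr (by grind)),
    Finsupp.ext h, rfl, rfl⟩

namespace Composition

variable {n : ℕ}

def consOne (c : Composition n) : Composition (n + 1) where
  blocks := 1 :: c.blocks
  blocks_pos := by
    intro i hi
    rcases List.mem_cons.mp hi with rfl | hi
    exacts [Nat.one_pos, c.blocks_pos hi]
  blocks_sum := by rw [List.sum_cons, c.blocks_sum, add_comm]

/-- For `n = 0` this is the composition `[1]` (`headI [] = 0`). -/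
def succHead (c : Composition n) : Composition (n + 1) where
  blocks := (c.blocks.headI + 1) :: c.blocks.tail
  blocks_pos := by
    intro i hi
    rcases List.mem_cons.mp hi with rfl | hi
    exacts [Nat.succ_pos _, c.blocks_pos (List.mem_of_mem_tail hi)]
  blocks_sum := by
    cases h : c.blocks with
    | nil => simp [← c.blocks_sum, h]
    | cons b bs =>
      simp only [List.headI_cons, List.tail_cons, List.sum_cons, ← c.blocks_sum, h]
      omega

lemma blocks_consOne (c : Composition n) : c.consOne.blocks = 1 :: c.blocks := rfl

lemma length_consOne (c : Composition n) : c.consOne.length = c.length + 1 := rfl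

lemma exists_blocks_eq_cons (hn : 0 < n) (c : Composition n) :
    ∃ b bs, 0 < b ∧ c.blocks = b :: bs := by
  obtain ⟨b, bs, h⟩ := List.exists_cons_of_ne_nil (mt c.blocks_eq_nil.mp hn.ne')
  exact ⟨b, bs, c.blocks_pos (h ▸ List.mem_cons_self), h⟩

lemma blocks_succHead {c : Composition n} {b : ℕ} {bs : List ℕ} (h : c.blocks = b :: bs) :
    c.succHead.blocks = (b + 1) :: bs := by
  simp [succHead, h]

lemma length_succHead (hn : 0 < n) (c : Composition n) : c.succHead.length = c.length := by
  obtain ⟨b, bs, -, h⟩ := exists_blocks_eq_cons hn c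
  simp [length, blocks_succHead h, h]

lemma bijective_sumElim_consOne_succHead (hn : 0 < n) :
    Function.Bijective (Sum.elim (consOne (n := n)) succHead) := by
  constructor
  · have hsucc : ∀ c : Composition n, ∃ b bs, 0 < b ∧ c.succHead.blocks = (b + 1) :: bs ∧
        c.blocks = b :: bs := fun c => by
      obtain ⟨b, bs, hb, h⟩ := exists_blocks_eq_cons hn c
      exact ⟨b, bs, hb, blocks_succHead h, h⟩
    rintro (c | c) (d | d) h <;> simp only [Sum.elim_inl, Sum.elim_inr] at h <;>
      have h := congrArg blocks h
    · exact congrArg _ (Composition.ext (List.cons.inj h).2)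
    · obtain ⟨b, bs, hb, hd, -⟩ := hsucc d
      rw [blocks_consOne, hd] at h
      grind
    · obtain ⟨b, bs, hb, hc, -⟩ := hsucc c
      rw [blocks_consOne, hc] at h
      grind
    · obtain ⟨b, bs, -, hc, hc'⟩ := hsucc c
      obtain ⟨b', bs', -, hd, hd'⟩ := hsucc d
      rw [hc, hd] at h
      obtain ⟨rfl, rfl⟩ : b = b' ∧ bs = bs' := by simpa using h
      exact congrArg _ (Composition.ext (hc'.trans hd'.symm))
  · intro d
    obtain ⟨b, bs, hb, h⟩ := exists_blocks_eq_cons (Nat.succ_pos n) d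
    have hsum : b + bs.sum = n + 1 := by rw [← List.sum_cons, ← h, d.blocks_sum]
    have hbs : ∀ i ∈ bs, 0 < i := fun i hi => d.blocks_pos (h ▸ List.mem_cons_of_mem _ hi)
    rcases Nat.lt_or_ge 1 b with hb1 | hb1
    swap
    · obtain rfl : b = 1 := by omega
      exact ⟨Sum.inl ⟨bs, hbs _, by omega⟩, Composition.ext (by simp [blocks_consOne, h])⟩
    · refine ⟨Sum.inr ⟨(b - 1) :: bs, ?_, by rw [List.sum_cons]; omega⟩, Composition.ext ?_⟩
      · intro i hi
        rcases List.mem_cons.mp hi with rfl | hi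
        exacts [by omega, hbs i hi]
      · rw [Sum.elim_inr, blocks_succHead rfl, h, Nat.sub_add_cancel hb]

lemma sum_univ_succ {M : Type*} [AddCommMonoid M] (hn : 0 < n) (f : Composition (n + 1) → M) :
    ∑ c, f c = ∑ c : Composition n, f c.consOne + ∑ c : Composition n, f c.succHead := by
  rw [← Fintype.sum_bijective _ (bijective_sumElim_consOne_succHead hn)
    (fun x => f (Sum.elim consOne succHead x)) f fun _ => rfl, Fintype.sum_sum_type]
  rfl

lemma eq_ones_of_le_one (hn : n ≤ 1) (c : Composition n) : c = ones n :=
  eq_ones_iff_le_length.mpr (by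
    interval_cases n
    · exact Nat.zero_le _
    · exact c.length_pos_iff.mpr one_pos)

end Composition

namespace List

variable {M : Type*}

lemma splitWrtComposition_consOne (a : M) (l : List M) (c : Composition l.length) :
    (a :: l).splitWrtComposition c.consOne = [a] :: l.splitWrtComposition c := by
  simp [splitWrtComposition, Composition.blocks_consOne, splitWrtCompositionAux_cons]

lemma map_sum_splitWrtComposition_succHead [AddMonoid M] (a g : M) (l : List M)
    (c : Composition (g :: l).length) :
    ((a :: g :: l).splitWrtComposition c.succHead).map sum =
      (((a + g) :: l).splitWrtComposition c).map sum := by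
  obtain ⟨b, bs, hb, h⟩ := c.exists_blocks_eq_cons (by simp)
  obtain ⟨k, rfl⟩ := Nat.exists_eq_add_of_lt hb
  simp [splitWrtComposition, Composition.blocks_succHead h, h, splitWrtCompositionAux_cons,
    add_assoc]

end List

/-- `(-1)^ℓ(α) ∑_β (-1)^ℓ(β) h_{β₁} ⋯ h_{β_ℓ}`, the coarsenings `β` of `α` being indexed by the
compositions `c` of `ℓ(α)`: `β_k` sums the `k`-th block of parts of `α`. -/
def signedCoarseningSum {R : Type*} [Ring R] (h : ℕ → R) (α : List ℕ) : R :=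
  (-1 : ℤ) ^ α.length • ∑ c : Composition α.length,
    (-1 : ℤ) ^ c.length • (((α.splitWrtComposition c).map List.sum).map h).prod

section signedCoarseningSum

variable {R : Type*} [Ring R] (h : ℕ → R)

lemma signedCoarseningSum_nil : signedCoarseningSum h [] = 1 := by
  change (-1 : ℤ) ^ 0 • ∑ c : Composition 0, _ = _
  rw [Fintype.sum_eq_single (Composition.ones 0)
    fun c hc => absurd (Composition.eq_ones_of_le_one zero_le_one c) hc]
  simp [List.splitWrtComposition, Composition.ones, Composition.length,
    List.splitWrtCompositionAux]

lemma signedCoarseningSum_singleton (a : ℕ) : signedCoarseningSum h [a] = h a := by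
  change (-1 : ℤ) ^ 1 • ∑ c : Composition 1, _ = _
  rw [Fintype.sum_eq_single (Composition.ones 1)
    fun c hc => absurd (Composition.eq_ones_of_le_one le_rfl c) hc]
  simp [List.splitWrtComposition, Composition.ones, Composition.length,
    List.splitWrtCompositionAux_cons, List.splitWrtCompositionAux]

lemma signedCoarseningSum_cons_cons (a g : ℕ) (gs : List ℕ) :
    signedCoarseningSum h (a :: g :: gs) =
      h a * signedCoarseningSum h (g :: gs) - signedCoarseningSum h ((a + g) :: gs) := by
  unfold signedCoarseningSum
  rw [List.length_cons, Composition.sum_univ_succ (by simp)]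
  simp only [List.splitWrtComposition_consOne, List.map_sum_splitWrtComposition_succHead,
    Composition.length_consOne, Composition.length_succHead (Nat.succ_pos _), List.map_cons,
    List.sum_singleton, List.prod_cons, List.length_cons, smul_add, Finset.mul_sum,
    Finset.smul_sum, mul_smul_comm, smul_smul, pow_succ]
  rw [sub_eq_add_neg, ← Finset.sum_neg_distrib]
  congr 1 <;> refine Finset.sum_congr rfl fun c _ => ?_
  · congr 1
    ring
  · rw [← neg_smul]
    congr 1
    ring

end signedCoarseningSum

namespace Ribbon

/-- Row `i` of the ribbon of `δ` occupies the columns `[rowStart δ i, rowEnd δ i)`. -/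
def rowEnd (δ : List ℕ) (i : ℕ) : ℕ := (δ.drop i).sum - (δ.length - 1 - i)

def rowStart (δ : List ℕ) (i : ℕ) : ℕ := rowEnd δ i - δ.getD i 0

@[simp]
lemma length_ribbonOuter (δ : List ℕ) : (ribbonOuter δ).length = δ.length := by
  simp [ribbonOuter]

lemma getD_ribbonOuter {δ : List ℕ} {i : ℕ} (h : i < δ.length) :
    (ribbonOuter δ).getD i 0 = rowEnd δ i := by
  simp [ribbonOuter, List.getD_eq_getElem?_getD, h, rowEnd]

lemma getD_ribbonInner {δ : List ℕ} {i : ℕ} (h : i < δ.length) :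
    (ribbonInner δ).getD i 0 = rowStart δ i := by
  simp [ribbonInner, List.getD_eq_getElem?_getD, h, rowStart, rowEnd]

lemma skewCell_ribbon_iff {δ : List ℕ} {i j : ℕ} :
    SkewCell (ribbonOuter δ) (ribbonInner δ) i j ↔
      i < δ.length ∧ rowStart δ i ≤ j ∧ j < rowEnd δ i := by
  unfold SkewCell
  rw [length_ribbonOuter]
  constructor
  · rintro ⟨hi, hs, he⟩
    exact ⟨hi, getD_ribbonInner hi ▸ hs, getD_ribbonOuter hi ▸ he⟩
  · rintro ⟨hi, hs, he⟩
    exact ⟨hi, (getD_ribbonInner hi).symm ▸ hs, (getD_ribbonOuter hi).symm ▸ he⟩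

lemma rowEnd_cons_succ (a : ℕ) (γ : List ℕ) (i : ℕ) : rowEnd (a :: γ) (i + 1) = rowEnd γ i := by
  simp only [rowEnd, List.drop_succ_cons, List.length_cons]
  congr 1
  omega

lemma rowStart_cons_succ (a : ℕ) (γ : List ℕ) (i : ℕ) :
    rowStart (a :: γ) (i + 1) = rowStart γ i := by
  simp [rowStart, rowEnd_cons_succ]

lemma skewCell_ribbon_cons_succ_iff {a : ℕ} {γ : List ℕ} {i j : ℕ} :
    SkewCell (ribbonOuter (a :: γ)) (ribbonInner (a :: γ)) (i + 1) j ↔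
      SkewCell (ribbonOuter γ) (ribbonInner γ) i j := by
  simp [skewCell_ribbon_iff, rowEnd_cons_succ, rowStart_cons_succ]

def rowCount (t : ℕ → ℕ) (s e v : ℕ) : ℕ := ((Finset.Ico s e).filter fun j => t j = v).card

lemma rowCount_eq_count (t : ℕ → ℕ) (s e v : ℕ) :
    rowCount t s e v = ((List.range' s (e - s)).map t).count v := by
  rw [rowCount, Finset.card_def, Finset.filter_val, Nat.Ico_eq_range', Multiset.filter_coe,
    Multiset.coe_card, List.count, List.countP_map, List.countP_eq_length_filter]
  simp only [Function.comp_def]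
  congr 1

lemma rowCount_congr {t t' : ℕ → ℕ} {s e : ℕ} (h : ∀ j, s ≤ j → j < e → t j = t' j) (v : ℕ) :
    rowCount t s e v = rowCount t' s e v := by
  unfold rowCount
  congr 1
  refine Finset.filter_congr fun j hj => ?_
  rw [Finset.mem_Ico] at hj
  rw [h j hj.1 hj.2]

lemma rowCount_add {t : ℕ → ℕ} {s m e : ℕ} (hsm : s ≤ m) (hme : m ≤ e) (v : ℕ) :
    rowCount t s m v + rowCount t m e v = rowCount t s e v := by
  unfold rowCount
  rw [← Finset.card_union_of_disjoint
      (Finset.disjoint_filter_filter (Finset.Ico_disjoint_Ico_consecutive s m e)),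
    ← Finset.filter_union, Finset.Ico_union_Ico_eq_Ico hsm hme]

lemma rowCount_add_right (t : ℕ → ℕ) (s e k v : ℕ) :
    rowCount t (s + k) (e + k) v = rowCount (fun j => t (j + k)) s e v := by
  unfold rowCount
  rw [← Finset.map_add_right_Ico, Finset.filter_map, Finset.card_map]
  rfl

lemma skewContent_ribbon_cons (a : ℕ) (γ : List ℕ) (U : ℕ → ℕ → ℕ) (v : ℕ) :
    skewContent (ribbonOuter (a :: γ)) (ribbonInner (a :: γ)) U v =
      rowCount (U 0) (rowStart (a :: γ) 0) (rowEnd (a :: γ) 0) v +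
        skewContent (ribbonOuter γ) (ribbonInner γ) (fun i => U (i + 1)) v := by
  unfold skewContent
  rw [length_ribbonOuter, length_ribbonOuter, List.length_cons, Finset.sum_range_succ',
    add_comm, getD_ribbonOuter (by simp), getD_ribbonInner (by simp)]
  congr 1
  refine Finset.sum_congr rfl fun i hi => ?_
  rw [Finset.mem_range] at hi
  rw [getD_ribbonOuter (by simpa using hi), getD_ribbonInner (by simpa using hi),
    getD_ribbonOuter hi, getD_ribbonInner hi, rowEnd_cons_succ, rowStart_cons_succ]

def IsRowFilling (s a : ℕ) (t : ℕ → ℕ) : Prop :=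
  (∀ j, ¬ (s ≤ j ∧ j < s + a) → t j = 0) ∧ ∀ j, s ≤ j → j + 1 < s + a → t j ≤ t (j + 1)

def rowFillings (s a : ℕ) (p : ℕ →₀ ℕ) : Set (ℕ → ℕ) :=
  {t | IsRowFilling s a t ∧ ∀ v, rowCount t s (s + a) v = p v}

section rowFillings

variable {s a : ℕ} {p : ℕ →₀ ℕ} {t : ℕ → ℕ}

lemma pairwise_map_range'_of_step (hstep : ∀ j, s ≤ j → j + 1 < s + a → t j ≤ t (j + 1)) :
    ((List.range' s a).map t).Pairwise (· ≤ ·) := by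
  have hmono : ∀ j k, s ≤ j → j ≤ k → k < s + a → t j ≤ t k := by
    intro j k hj hjk hk
    induction k, hjk using Nat.le_induction with
    | base => rfl
    | succ k hjk ih => exact (ih (by omega)).trans (hstep k (by omega) hk)
  rw [List.pairwise_map]
  refine (List.pairwise_lt_range' (s := s) (n := a)).imp_of_mem fun hj hk hjk => ?_
  rw [List.mem_range'_1] at hj hk
  exact hmono _ _ hj.1 hjk.le hk.2

lemma coe_map_range'_of_mem_rowFillings (ht : t ∈ rowFillings s a p) :
    (((List.range' s a).map t : List ℕ) : Multiset ℕ) = Finsupp.toMultiset p := by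
  ext v
  rw [Multiset.coe_count, Finsupp.count_toMultiset, ← ht.2 v, rowCount_eq_count,
    Nat.add_sub_cancel_left]

lemma degree_eq_of_mem_rowFillings (ht : t ∈ rowFillings s a p) : p.degree = a := by
  have h := congrArg Multiset.card (coe_map_range'_of_mem_rowFillings ht)
  rw [Multiset.coe_card, List.length_map, List.length_range', Finsupp.card_toMultiset] at h
  exact h.symm

lemma rowFillings_subsingleton : (rowFillings s a p).Subsingleton := by
  intro t ht t' ht'
  have hlist : (List.range' s a).map t = (List.range' s a).map t' :=
    List.Perm.eq_of_pairwise' (pairwise_map_range'_of_step ht.1.2)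
      (pairwise_map_range'_of_step ht'.1.2)
      (Multiset.coe_eq_coe.mp ((coe_map_range'_of_mem_rowFillings ht).trans
        (coe_map_range'_of_mem_rowFillings ht').symm))
  funext j
  by_cases hj : s ≤ j ∧ j < s + a
  · have := congrArg (fun l : List ℕ => l[j - s]?) hlist
    simpa [List.getElem?_range', show j - s < a by omega, show s + (j - s) = j by omega]
      using this
  · rw [ht.1.1 j hj, ht'.1.1 j hj]

lemma rowFillings_nonempty (hp : p.degree = a) : (rowFillings s a p).Nonempty := by
  set l := (Finsupp.toMultiset p).sort (· ≤ ·)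
  have hsorted : l.Pairwise (· ≤ ·) := Multiset.pairwise_sort _ _
  have hl : l.length = a := by
    rw [← hp, ← Multiset.coe_card, Multiset.sort_eq, Finsupp.card_toMultiset]
    rfl
  have hmap : (List.range' s a).map (fun j => l.getD (j - s) 0) = l := by
    refine List.ext_getElem (by simp [hl]) fun k h1 h2 => ?_
    simp [h2]
  refine ⟨fun j => if s ≤ j ∧ j < s + a then l.getD (j - s) 0 else 0,
    ⟨fun j hj => if_neg hj, fun j h1 h2 => ?_⟩, fun v => ?_⟩
  · dsimp only
    rw [if_pos ⟨h1, by omega⟩, if_pos ⟨by omega, h2⟩, List.getD_eq_getElem _ _ (by omega),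
      List.getD_eq_getElem _ _ (by omega)]
    exact hsorted.rel_get_of_lt
      (a := ⟨j - s, by omega⟩) (b := ⟨j + 1 - s, by omega⟩) (by simp only [Fin.lt_def]; omega)
  · rw [rowCount_eq_count, Nat.add_sub_cancel_left,
      List.map_congr_left (g := fun j => l.getD (j - s) 0)
        (fun j hj => if_pos (List.mem_range'_1.mp hj)), hmap, ← Multiset.coe_count,
      Multiset.sort_eq, Finsupp.count_toMultiset]

lemma ncard_rowFillings : (rowFillings s a p).ncard = if p.degree = a then 1 else 0 := by
  split_ifs with hp
  · obtain ⟨t, ht⟩ := rowFillings_nonempty (s := s) hp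
    rw [rowFillings_subsingleton.eq_singleton_of_mem ht, Set.ncard_singleton]
  · rw [Set.eq_empty_of_forall_notMem fun t ht => hp (degree_eq_of_mem_rowFillings ht),
      Set.ncard_empty]

end rowFillings

def ssyt (lam mu : List ℕ) (m : ℕ →₀ ℕ) : Set (ℕ → ℕ → ℕ) :=
  {T | IsSkewSSYT lam mu T ∧ ∀ v, skewContent lam mu T v = m v}

lemma coeff_skewSchur (lam mu : List ℕ) (m : ℕ →₀ ℕ) :
    MvPowerSeries.coeff m (skewSchur lam mu) = (ssyt lam mu m).ncard := rfl

lemma mem_support_of_skewCell {lam mu : List ℕ} {m : ℕ →₀ ℕ} {T : ℕ → ℕ → ℕ}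
    (hT : ∀ v, skewContent lam mu T v = m v) {i j : ℕ} (hij : SkewCell lam mu i j) :
    T i j ∈ m.support := by
  rw [Finsupp.mem_support_iff, ← hT, skewContent, Ne, Finset.sum_eq_zero_iff]
  exact fun h => Finset.card_ne_zero_of_mem (s := (Finset.Ico _ _).filter fun j' => T i j' = T i j)
    (Finset.mem_filter.mpr ⟨Finset.mem_Ico.mpr hij.2, rfl⟩) (h i (Finset.mem_range.mpr hij.1))

lemma ssyt_finite (lam mu : List ℕ) (m : ℕ →₀ ℕ) : (ssyt lam mu m).Finite := by
  set C : Finset (ℕ × ℕ) := Finset.range lam.length ×ˢ Finset.range lam.sum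
  have hC : ∀ i j, SkewCell lam mu i j → (i, j) ∈ C := fun i j hij =>
    Finset.mem_product.mpr ⟨Finset.mem_range.mpr hij.1, Finset.mem_range.mpr
      (hij.2.2.trans_le (by
        rw [List.getD_eq_getElem _ _ hij.1]
        exact List.le_sum_of_mem (List.getElem_mem hij.1)))⟩
  refine Set.Finite.of_finite_image (f := fun T (c : C) => T c.1.1 c.1.2) ?_ ?_
  · refine (Set.Finite.pi' (t := fun _ => insert 0 (m.support : Set ℕ))
      fun _ => (m.support.finite_toSet.insert 0)).subset ?_
    rintro _ ⟨T, ⟨⟨hker, -⟩, hT⟩, rfl⟩ ⟨⟨i, j⟩, -⟩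
    by_cases hij : SkewCell lam mu i j
    · exact Set.mem_insert_of_mem _ (mem_support_of_skewCell hT hij)
    · simp [hker i j hij]
  · rintro T ⟨⟨hker, -⟩, -⟩ T' ⟨⟨hker', -⟩, -⟩ h
    funext i j
    by_cases hij : SkewCell lam mu i j
    · exact congrFun h ⟨(i, j), hC i j hij⟩
    · rw [hker i j hij, hker' i j hij]

lemma rowEnd_cons_zero {a : ℕ} {γ : List ℕ} (hγ : IsCompositionList γ) :
    rowEnd (a :: γ) 0 = rowStart (a :: γ) 0 + a := by
  have := hγ.length_le_sum
  simp only [rowStart, rowEnd, List.drop_zero, List.sum_cons, List.length_cons,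
    List.getD_cons_zero]
  omega

lemma skewCell_ribbon_cons_zero_iff {a : ℕ} {γ : List ℕ} (hγ : IsCompositionList γ) {j : ℕ} :
    SkewCell (ribbonOuter (a :: γ)) (ribbonInner (a :: γ)) 0 j ↔
      rowStart (a :: γ) 0 ≤ j ∧ j < rowStart (a :: γ) 0 + a := by
  simp [skewCell_ribbon_iff, rowEnd_cons_zero hγ]

/-- Column strictness between rows `0` and `1` is dropped: these are the semistandard fillings of
the skew shape obtained by sliding the top row of the ribbon off the rest. -/
def detachedFillings (δ : List ℕ) (m : ℕ →₀ ℕ) : Set (ℕ → ℕ → ℕ) :=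
  {U | (∀ i j, ¬ SkewCell (ribbonOuter δ) (ribbonInner δ) i j → U i j = 0) ∧
    (∀ i j, SkewCell (ribbonOuter δ) (ribbonInner δ) i j →
      SkewCell (ribbonOuter δ) (ribbonInner δ) i (j + 1) → U i j ≤ U i (j + 1)) ∧
    (∀ i j, SkewCell (ribbonOuter δ) (ribbonInner δ) (i + 1) j →
      SkewCell (ribbonOuter δ) (ribbonInner δ) (i + 2) j → U (i + 1) j < U (i + 2) j) ∧
    ∀ v, skewContent (ribbonOuter δ) (ribbonInner δ) U v = m v}

def consRow (t : ℕ → ℕ) (T : ℕ → ℕ → ℕ) : ℕ → ℕ → ℕ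
  | 0 => t
  | i + 1 => T i

def unconsRow (U : ℕ → ℕ → ℕ) : (ℕ → ℕ) × (ℕ → ℕ → ℕ) := (U 0, fun i => U (i + 1))

lemma unconsRow_injective : Function.Injective unconsRow := by
  intro U U' h
  funext i
  cases i with
  | zero => exact congrArg Prod.fst h
  | succ i => exact congrFun (congrArg Prod.snd h) i

lemma consRow_unconsRow (U : ℕ → ℕ → ℕ) : consRow (unconsRow U).1 (unconsRow U).2 = U := by
  funext i
  cases i <;> rfl

section peel

variable {a : ℕ} {γ : List ℕ} (hγ : IsCompositionList γ) {m : ℕ →₀ ℕ}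
include hγ

lemma consRow_mem_detachedFillings_iff {t : ℕ → ℕ} {T : ℕ → ℕ → ℕ} :
    consRow t T ∈ detachedFillings (a :: γ) m ↔
      IsRowFilling (rowStart (a :: γ) 0) a t ∧ IsSkewSSYT (ribbonOuter γ) (ribbonInner γ) T ∧
        ∀ v, rowCount t (rowStart (a :: γ) 0) (rowStart (a :: γ) 0 + a) v +
          skewContent (ribbonOuter γ) (ribbonInner γ) T v = m v := by
  have hcell0 := fun j => skewCell_ribbon_cons_zero_iff (a := a) hγ (j := j)
  have hcontent : ∀ v, skewContent (ribbonOuter (a :: γ)) (ribbonInner (a :: γ)) (consRow t T) v =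
      rowCount t (rowStart (a :: γ) 0) (rowStart (a :: γ) 0 + a) v +
        skewContent (ribbonOuter γ) (ribbonInner γ) T v := fun v => by
    rw [skewContent_ribbon_cons, rowEnd_cons_zero hγ]
    rfl
  simp only [detachedFillings, Set.mem_ofPred_eq, hcontent]
  constructor
  · rintro ⟨hker, hrow, hcol, hcont⟩
    refine ⟨⟨fun j hj => hker 0 j ((hcell0 j).not.mpr hj),
      fun j h1 h2 => hrow 0 j ((hcell0 j).mpr ⟨h1, by omega⟩) ((hcell0 _).mpr ⟨by omega, h2⟩)⟩,
      ⟨fun i j h => hker (i + 1) j (skewCell_ribbon_cons_succ_iff.not.mpr h),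
      fun i j h1 h2 => hrow (i + 1) j (skewCell_ribbon_cons_succ_iff.mpr h1)
        (skewCell_ribbon_cons_succ_iff.mpr h2),
      fun i j h1 h2 => hcol i j (skewCell_ribbon_cons_succ_iff.mpr h1)
        (skewCell_ribbon_cons_succ_iff.mpr h2)⟩, hcont⟩
  · rintro ⟨⟨hker0, hrow0⟩, ⟨hker, hrow, hcol⟩, hcont⟩
    refine ⟨fun i j h => ?_, fun i j h1 h2 => ?_,
      fun i j h1 h2 => hcol i j (skewCell_ribbon_cons_succ_iff.mp h1)
        (skewCell_ribbon_cons_succ_iff.mp h2), hcont⟩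
    · cases i with
      | zero => exact hker0 j ((hcell0 j).not.mp h)
      | succ i => exact hker i j (skewCell_ribbon_cons_succ_iff.not.mp h)
    · cases i with
      | zero => exact hrow0 j ((hcell0 j).mp h1).1 ((hcell0 _).mp h2).2
      | succ i =>
        exact hrow i j (skewCell_ribbon_cons_succ_iff.mp h1) (skewCell_ribbon_cons_succ_iff.mp h2)

lemma unconsRow_image_detachedFillings :
    unconsRow '' detachedFillings (a :: γ) m =
      ⋃ p ∈ Finset.HasAntidiagonal.antidiagonal m,
        rowFillings (rowStart (a :: γ) 0) a p.1 ×ˢ ssyt (ribbonOuter γ) (ribbonInner γ) p.2 := by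
  ext ⟨t, T⟩
  have hmem : (t, T) ∈ unconsRow '' detachedFillings (a :: γ) m ↔
      consRow t T ∈ detachedFillings (a :: γ) m :=
    ⟨fun ⟨U, hU, h⟩ => by rwa [← consRow_unconsRow U, h] at hU, fun h => ⟨_, h, rfl⟩⟩
  simp only [hmem, consRow_mem_detachedFillings_iff hγ, Set.mem_iUnion, Set.mem_prod,
    exists_prop, Finset.HasAntidiagonal.mem_antidiagonal]
  constructor
  · rintro ⟨hrow, hT, hcont⟩
    obtain ⟨p, hp, hp₁, hp₂⟩ := Finsupp.exists_add_eq_of_forall_add_eq hcont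
    exact ⟨p, hp, ⟨hrow, fun v => (congrFun hp₁ v).symm⟩, hT, fun v => (congrFun hp₂ v).symm⟩
  · rintro ⟨p, hp, ⟨hrow, hrowc⟩, hT, hTc⟩
    exact ⟨hrow, hT, fun v => by rw [hrowc, hTc, ← Finsupp.add_apply, hp]⟩

lemma ncard_detachedFillings_cons :
    (detachedFillings (a :: γ) m).ncard =
      ∑ p ∈ Finset.HasAntidiagonal.antidiagonal m,
        (rowFillings (rowStart (a :: γ) 0) a p.1).ncard *
          (ssyt (ribbonOuter γ) (ribbonInner γ) p.2).ncard := by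
  simp_rw [← Set.ncard_prod]
  rw [← Set.ncard_image_of_injective _ unconsRow_injective,
    unconsRow_image_detachedFillings hγ, ← finsum_mem_coe_finset,
    ← (Finset.finite_toSet _).ncard_biUnion]
  · rfl
  · exact fun p _ => (rowFillings_subsingleton.finite).prod (ssyt_finite _ _ _)
  · intro p _ q _ hpq
    refine Set.disjoint_left.mpr fun x hp hq => hpq (Prod.ext ?_ ?_)
    · exact Finsupp.ext fun v => (hp.1.2 v).symm.trans (hq.1.2 v)
    · exact Finsupp.ext fun v => (hp.2.2 v).symm.trans (hq.2.2 v)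

end peel

lemma coeff_hN_mul_ribbonSchur {a : ℕ} {γ : List ℕ} (hγ : IsCompositionList γ) (m : ℕ →₀ ℕ) :
    MvPowerSeries.coeff m (hN a * ribbonSchur γ) = (detachedFillings (a :: γ) m).ncard := by
  rw [MvPowerSeries.coeff_mul, ncard_detachedFillings_cons hγ, Nat.cast_sum]
  refine Finset.sum_congr rfl fun p _ => ?_
  rw [ncard_rowFillings, ribbonSchur, coeff_skewSchur]
  change (if p.1.degree = a then 1 else 0) * _ = _
  split_ifs <;> simp

lemma ssyt_subset_detachedFillings (δ : List ℕ) (m : ℕ →₀ ℕ) :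
    ssyt (ribbonOuter δ) (ribbonInner δ) m ⊆ detachedFillings δ m :=
  fun _ ⟨⟨hker, hrow, hcol⟩, hcont⟩ => ⟨hker, hrow, fun i j => hcol (i + 1) j, hcont⟩

lemma detachedFillings_singleton (a : ℕ) (m : ℕ →₀ ℕ) :
    detachedFillings [a] m = ssyt (ribbonOuter [a]) (ribbonInner [a]) m := by
  have hcell : ∀ i j, ¬ SkewCell (ribbonOuter [a]) (ribbonInner [a]) (i + 1) j := by
    simp [skewCell_ribbon_iff]
  refine (Set.Subset.antisymm ?_ (ssyt_subset_detachedFillings _ m))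
  rintro U ⟨hker, hrow, -, hcont⟩
  exact ⟨⟨hker, hrow, fun i j _ h => absurd h (hcell i j)⟩, hcont⟩

/-- The two top rows of the ribbon of `a :: g :: gs` overlap in the column `c`; gluing them, with
row `0` moved one column to the right, gives the top row of the ribbon of `(a + g) :: gs`. -/
def mergeTopRows (c : ℕ) (U : ℕ → ℕ → ℕ) : ℕ → ℕ → ℕ
  | 0 => fun j => if j ≤ c then U 1 j else U 0 (j - 1)
  | i + 1 => U (i + 2)

def splitTopRow (s c e : ℕ) (V : ℕ → ℕ → ℕ) : ℕ → ℕ → ℕ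
  | 0 => fun j => if c ≤ j ∧ j < e then V 0 (j + 1) else 0
  | 1 => fun j => if s ≤ j ∧ j ≤ c then V 0 j else 0
  | i + 2 => V (i + 1)

lemma rowEnd_succ {δ : List ℕ} {i : ℕ} (hδ : IsCompositionList (δ.drop (i + 1)))
    (hi : i + 1 < δ.length) : rowEnd δ (i + 1) = rowStart δ i + 1 := by
  have hlen := hδ.length_le_sum
  have hsum : (δ.drop i).sum = δ.getD i 0 + (δ.drop (i + 1)).sum := by
    rw [List.getD_eq_getElem _ _ (by omega), List.drop_eq_getElem_cons (by omega), List.sum_cons]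
  simp only [List.length_drop] at hlen
  unfold rowStart rowEnd
  omega

lemma le_rowStart_of_skewCell_succ {δ : List ℕ} {i j : ℕ}
    (hδ : IsCompositionList (δ.drop (i + 1)))
    (h : SkewCell (ribbonOuter δ) (ribbonInner δ) (i + 1) j) : j ≤ rowStart δ i := by
  obtain ⟨hi, -, hj⟩ := skewCell_ribbon_iff.mp h
  rw [rowEnd_succ hδ hi] at hj
  omega

lemma skewCell_ribbon_cons_cons_iff {a g : ℕ} {gs : List ℕ} {i j : ℕ} :
    SkewCell (ribbonOuter (a :: g :: gs)) (ribbonInner (a :: g :: gs)) (i + 2) j ↔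
      SkewCell (ribbonOuter ((a + g) :: gs)) (ribbonInner ((a + g) :: gs)) (i + 1) j := by
  rw [skewCell_ribbon_cons_succ_iff, skewCell_ribbon_cons_succ_iff,
    skewCell_ribbon_cons_succ_iff]

lemma rowStart_merge {a g : ℕ} {gs : List ℕ} (hgs : IsCompositionList gs) :
    rowStart ((a + g) :: gs) 0 = rowStart (a :: g :: gs) 1 := by
  have := hgs.length_le_sum
  simp only [rowStart, rowEnd, List.drop, List.sum_cons, List.length_cons, List.getD_cons_zero,
    List.getD_cons_succ]
  omega

section corner

variable {a g : ℕ} {gs : List ℕ} (hg : 0 < g) (hgs : IsCompositionList gs)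
include hg hgs

lemma rowEnd_cons_cons_one : rowEnd (a :: g :: gs) 1 = rowStart (a :: g :: gs) 0 + 1 :=
  rowEnd_succ (hgs.cons hg) (by simp)

lemma rowStart_cons_cons_one_add :
    rowStart (a :: g :: gs) 1 + g = rowStart (a :: g :: gs) 0 + 1 := by
  have := hgs.length_le_sum
  simp only [rowStart, rowEnd, List.drop, List.sum_cons, List.length_cons, List.getD_cons_zero,
    List.getD_cons_succ]
  omega

lemma rowEnd_merge : rowEnd ((a + g) :: gs) 0 = rowStart (a :: g :: gs) 0 + a + 1 := by
  have := hgs.length_le_sum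
  simp only [rowStart, rowEnd, List.drop, List.sum_cons, List.length_cons, List.getD_cons_zero]
  omega

lemma skewCell_cons_cons_one_iff {j : ℕ} :
    SkewCell (ribbonOuter (a :: g :: gs)) (ribbonInner (a :: g :: gs)) 1 j ↔
      rowStart (a :: g :: gs) 1 ≤ j ∧ j < rowStart (a :: g :: gs) 0 + 1 := by
  simp [skewCell_ribbon_iff, rowEnd_cons_cons_one hg hgs]

lemma skewCell_merge_zero_iff {j : ℕ} :
    SkewCell (ribbonOuter ((a + g) :: gs)) (ribbonInner ((a + g) :: gs)) 0 j ↔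
      rowStart (a :: g :: gs) 1 ≤ j ∧ j < rowStart (a :: g :: gs) 0 + a + 1 := by
  simp [skewCell_ribbon_iff, rowEnd_merge hg hgs, rowStart_merge hgs]

lemma skewContent_ribbon_cons_cons (U : ℕ → ℕ → ℕ) (v : ℕ) :
    skewContent (ribbonOuter (a :: g :: gs)) (ribbonInner (a :: g :: gs)) U v =
      rowCount (U 0) (rowStart (a :: g :: gs) 0) (rowStart (a :: g :: gs) 0 + a) v +
        rowCount (U 1) (rowStart (a :: g :: gs) 1) (rowStart (a :: g :: gs) 0 + 1) v +
          skewContent (ribbonOuter gs) (ribbonInner gs) (fun i => U (i + 2)) v := by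
  rw [skewContent_ribbon_cons, skewContent_ribbon_cons, rowEnd_cons_zero (hgs.cons hg),
    ← rowEnd_cons_succ a (g :: gs) 0, ← rowStart_cons_succ a (g :: gs) 0,
    rowEnd_cons_cons_one hg hgs, add_assoc]

lemma skewContent_merge (V : ℕ → ℕ → ℕ) (v : ℕ) :
    skewContent (ribbonOuter ((a + g) :: gs)) (ribbonInner ((a + g) :: gs)) V v =
      rowCount (V 0) (rowStart (a :: g :: gs) 1) (rowStart (a :: g :: gs) 0 + a + 1) v +
        skewContent (ribbonOuter gs) (ribbonInner gs) (fun i => V (i + 1)) v := by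
  rw [skewContent_ribbon_cons, rowEnd_merge hg hgs, rowStart_merge hgs]

lemma skewContent_mergeTopRows (U : ℕ → ℕ → ℕ) (v : ℕ) :
    skewContent (ribbonOuter ((a + g) :: gs)) (ribbonInner ((a + g) :: gs))
        (mergeTopRows (rowStart (a :: g :: gs) 0) U) v =
      skewContent (ribbonOuter (a :: g :: gs)) (ribbonInner (a :: g :: gs)) U v := by
  set c := rowStart (a :: g :: gs) 0
  have hs := rowStart_cons_cons_one_add (a := a) hg hgs
  rw [skewContent_merge hg hgs, skewContent_ribbon_cons_cons hg hgs,
    ← rowCount_add (m := c + 1) (by omega) (by omega), rowCount_add_right _ c (c + a) 1]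
  have hleft : rowCount (mergeTopRows c U 0) (rowStart (a :: g :: gs) 1) (c + 1) v =
      rowCount (U 1) (rowStart (a :: g :: gs) 1) (c + 1) v :=
    rowCount_congr (fun j _ hj => if_pos (by omega)) v
  have hright : rowCount (fun j => mergeTopRows c U 0 (j + 1)) c (c + a) v =
      rowCount (U 0) c (c + a) v :=
    rowCount_congr (fun j hj _ => (if_neg (by omega)).trans (by simp)) v
  rw [hleft, hright, add_comm (rowCount (U 1) _ _ v)]
  rfl

lemma mergeTopRows_splitTopRow {V : ℕ → ℕ → ℕ}
    (hV : ∀ i j, ¬ SkewCell (ribbonOuter ((a + g) :: gs)) (ribbonInner ((a + g) :: gs)) i j →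
      V i j = 0) :
    mergeTopRows (rowStart (a :: g :: gs) 0)
      (splitTopRow (rowStart (a :: g :: gs) 1) (rowStart (a :: g :: gs) 0)
        (rowStart (a :: g :: gs) 0 + a) V) = V := by
  have hs := rowStart_cons_cons_one_add (a := a) hg hgs
  have hV0 := fun j => mt (hV 0 j)
  simp only [skewCell_merge_zero_iff hg hgs] at hV0
  funext i j
  cases i with
  | zero =>
    simp only [mergeTopRows, splitTopRow]
    split_ifs <;> grind
  | succ i => rfl

lemma splitTopRow_mergeTopRows {U : ℕ → ℕ → ℕ}
    (hU : ∀ i j, ¬ SkewCell (ribbonOuter (a :: g :: gs)) (ribbonInner (a :: g :: gs)) i j →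
      U i j = 0) :
    splitTopRow (rowStart (a :: g :: gs) 1) (rowStart (a :: g :: gs) 0)
      (rowStart (a :: g :: gs) 0 + a) (mergeTopRows (rowStart (a :: g :: gs) 0) U) = U := by
  have hU0 := fun j => mt (hU 0 j)
  have hU1 := fun j => mt (hU 1 j)
  simp only [skewCell_ribbon_cons_zero_iff (hgs.cons hg), skewCell_cons_cons_one_iff hg hgs]
    at hU0 hU1
  funext i j
  match i with
  | 0 =>
    simp only [splitTopRow, mergeTopRows]
    split_ifs <;> grind
  | 1 =>
    simp only [splitTopRow, mergeTopRows]
    split_ifs <;> grind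
  | i + 2 => rfl

lemma splitTopRow_mem_detachedFillings (ha : 0 < a) {m : ℕ →₀ ℕ} {V : ℕ → ℕ → ℕ}
    (hV : V ∈ ssyt (ribbonOuter ((a + g) :: gs)) (ribbonInner ((a + g) :: gs)) m) :
    splitTopRow (rowStart (a :: g :: gs) 1) (rowStart (a :: g :: gs) 0)
      (rowStart (a :: g :: gs) 0 + a) V ∈ detachedFillings (a :: g :: gs) m := by
  obtain ⟨⟨hker, hrow, hcol⟩, hcont⟩ := hV
  have hs := rowStart_cons_cons_one_add (a := a) hg hgs
  have hcell0 := fun j => skewCell_ribbon_cons_zero_iff (a := a) (hgs.cons hg) (j := j)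
  have hcell1 := fun j => skewCell_cons_cons_one_iff (a := a) hg hgs (j := j)
  have hcellV := fun j => skewCell_merge_zero_iff (a := a) hg hgs (j := j)
  set c := rowStart (a :: g :: gs) 0
  set s := rowStart (a :: g :: gs) 1
  refine ⟨fun i j h => ?_, fun i j h1 h2 => ?_, fun i j h1 h2 => ?_, fun v => ?_⟩
  · match i with
    | 0 => exact if_neg ((hcell0 j).not.mp h)
    | 1 => exact if_neg (by rw [hcell1] at h; omega)
    | i + 2 => exact hker (i + 1) j (skewCell_ribbon_cons_cons_iff.not.mp h)
  · match i with
    | 0 =>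
      rw [hcell0] at h1 h2
      simp only [splitTopRow, if_pos h1, if_pos h2]
      exact hrow 0 (j + 1) ((hcellV _).mpr (by omega)) ((hcellV _).mpr (by omega))
    | 1 =>
      rw [hcell1] at h1 h2
      simp only [splitTopRow, if_pos (show s ≤ j ∧ j ≤ c by omega),
        if_pos (show s ≤ j + 1 ∧ j + 1 ≤ c by omega)]
      exact hrow 0 j ((hcellV _).mpr (by omega)) ((hcellV _).mpr (by omega))
    | i + 2 =>
      exact hrow (i + 1) j (skewCell_ribbon_cons_cons_iff.mp h1)
        (skewCell_ribbon_cons_cons_iff.mp h2)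
  · match i with
    | 0 =>
      rw [hcell1] at h1
      simp only [splitTopRow, if_pos (show s ≤ j ∧ j ≤ c by omega)]
      exact hcol 0 j ((hcellV _).mpr (by omega)) (skewCell_ribbon_cons_cons_iff.mp h2)
    | i + 1 =>
      exact hcol (i + 1) j (skewCell_ribbon_cons_cons_iff.mp h1)
        (skewCell_ribbon_cons_cons_iff.mp h2)
  · rw [← skewContent_mergeTopRows hg hgs, mergeTopRows_splitTopRow hg hgs hker, hcont]

lemma splitTopRow_corner_le (ha : 0 < a) {m : ℕ →₀ ℕ} {V : ℕ → ℕ → ℕ}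
    (hV : V ∈ ssyt (ribbonOuter ((a + g) :: gs)) (ribbonInner ((a + g) :: gs)) m) :
    splitTopRow (rowStart (a :: g :: gs) 1) (rowStart (a :: g :: gs) 0)
        (rowStart (a :: g :: gs) 0 + a) V 1 (rowStart (a :: g :: gs) 0) ≤
      splitTopRow (rowStart (a :: g :: gs) 1) (rowStart (a :: g :: gs) 0)
        (rowStart (a :: g :: gs) 0 + a) V 0 (rowStart (a :: g :: gs) 0) := by
  have hs := rowStart_cons_cons_one_add (a := a) hg hgs
  have hcellV := fun j => skewCell_merge_zero_iff (a := a) hg hgs (j := j)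
  set c := rowStart (a :: g :: gs) 0
  set s := rowStart (a :: g :: gs) 1
  simp only [splitTopRow, if_pos (show s ≤ c ∧ c ≤ c by omega),
    if_pos (show c ≤ c ∧ c < c + a by omega)]
  exact hV.1.2.1 0 c ((hcellV _).mpr (by omega)) ((hcellV _).mpr (by omega))

lemma mergeTopRows_mem_ssyt {m : ℕ →₀ ℕ} {U : ℕ → ℕ → ℕ}
    (hU : U ∈ detachedFillings (a :: g :: gs) m)
    (hcorner : U 1 (rowStart (a :: g :: gs) 0) ≤ U 0 (rowStart (a :: g :: gs) 0)) :
    mergeTopRows (rowStart (a :: g :: gs) 0) U ∈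
      ssyt (ribbonOuter ((a + g) :: gs)) (ribbonInner ((a + g) :: gs)) m := by
  obtain ⟨hker, hrow, hcol, hcont⟩ := hU
  have hs := rowStart_cons_cons_one_add (a := a) hg hgs
  have hcell0 := fun j => skewCell_ribbon_cons_zero_iff (a := a) (hgs.cons hg) (j := j)
  have hcell1 := fun j => skewCell_cons_cons_one_iff (a := a) hg hgs (j := j)
  have hcellV := fun j => skewCell_merge_zero_iff (a := a) hg hgs (j := j)
  set c := rowStart (a :: g :: gs) 0
  set s := rowStart (a :: g :: gs) 1
  refine ⟨⟨fun i j h => ?_, fun i j h1 h2 => ?_, fun i j h1 h2 => ?_⟩, fun v => ?_⟩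
  · cases i with
    | zero =>
      rw [hcellV] at h
      simp only [mergeTopRows]
      split_ifs
      · exact hker 1 j (by rw [hcell1]; omega)
      · exact hker 0 (j - 1) (by rw [hcell0]; omega)
    | succ i => exact hker (i + 2) j (skewCell_ribbon_cons_cons_iff.not.mpr h)
  · cases i with
    | zero =>
      rw [hcellV] at h1 h2
      simp only [mergeTopRows]
      split_ifs with hj hj'
      · exact hrow 1 j ((hcell1 _).mpr (by omega)) ((hcell1 _).mpr (by omega))
      · rwa [show j = c by omega, show c + 1 - 1 = c by omega]
      · omega
      · rw [show j = j - 1 + 1 by omega, Nat.add_sub_cancel]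
        exact hrow 0 (j - 1) ((hcell0 _).mpr (by omega)) ((hcell0 _).mpr (by omega))
    | succ i =>
      exact hrow (i + 2) j (skewCell_ribbon_cons_cons_iff.mpr h1)
        (skewCell_ribbon_cons_cons_iff.mpr h2)
  · cases i with
    | zero =>
      have h2' : SkewCell (ribbonOuter (a :: g :: gs)) (ribbonInner (a :: g :: gs)) 2 j :=
        skewCell_ribbon_cons_cons_iff.mpr h2
      have hj : j ≤ s := le_rowStart_of_skewCell_succ (by simpa using hgs) h2'
      rw [hcellV] at h1
      simp only [mergeTopRows, if_pos (show j ≤ c by omega)]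
      exact hcol 0 j ((hcell1 _).mpr (by omega)) h2'
    | succ i =>
      exact hcol (i + 1) j (skewCell_ribbon_cons_cons_iff.mpr h1)
        (skewCell_ribbon_cons_cons_iff.mpr h2)
  · rw [skewContent_mergeTopRows hg hgs, hcont]

lemma mem_ssyt_iff_corner_lt (ha : 0 < a) {m : ℕ →₀ ℕ} {U : ℕ → ℕ → ℕ} :
    U ∈ ssyt (ribbonOuter (a :: g :: gs)) (ribbonInner (a :: g :: gs)) m ↔
      U ∈ detachedFillings (a :: g :: gs) m ∧
        U 0 (rowStart (a :: g :: gs) 0) < U 1 (rowStart (a :: g :: gs) 0) := by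
  have hs := rowStart_cons_cons_one_add (a := a) hg hgs
  have hcell0 := fun j => skewCell_ribbon_cons_zero_iff (a := a) (hgs.cons hg) (j := j)
  have hcell1 := fun j => skewCell_cons_cons_one_iff (a := a) hg hgs (j := j)
  constructor
  · intro hU
    exact ⟨ssyt_subset_detachedFillings _ m hU,
      hU.1.2.2 0 _ ((hcell0 _).mpr (by omega)) ((hcell1 _).mpr (by omega))⟩
  · rintro ⟨⟨hker, hrow, hcol, hcont⟩, hcorner⟩
    refine ⟨⟨hker, hrow, fun i j h1 h2 => ?_⟩, hcont⟩
    cases i with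
    | zero =>
      rw [hcell0] at h1
      rw [hcell1] at h2
      rwa [show j = rowStart (a :: g :: gs) 0 by omega]
    | succ i => exact hcol i j h1 h2

lemma ncard_detachedFillings_cons_cons (ha : 0 < a) (m : ℕ →₀ ℕ) :
    (detachedFillings (a :: g :: gs) m).ncard =
      (ssyt (ribbonOuter (a :: g :: gs)) (ribbonInner (a :: g :: gs)) m).ncard +
        (ssyt (ribbonOuter ((a + g) :: gs)) (ribbonInner ((a + g) :: gs)) m).ncard := by
  set split := splitTopRow (rowStart (a :: g :: gs) 1) (rowStart (a :: g :: gs) 0)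
    (rowStart (a :: g :: gs) 0 + a)
  have hunion : detachedFillings (a :: g :: gs) m =
      ssyt (ribbonOuter (a :: g :: gs)) (ribbonInner (a :: g :: gs)) m ∪
        split '' ssyt (ribbonOuter ((a + g) :: gs)) (ribbonInner ((a + g) :: gs)) m := by
    refine Set.Subset.antisymm (fun U hU => ?_) (Set.union_subset
      (ssyt_subset_detachedFillings _ m) (Set.image_subset_iff.mpr
        fun V hV => splitTopRow_mem_detachedFillings hg hgs ha hV))
    by_cases hcorner : U 0 (rowStart (a :: g :: gs) 0) < U 1 (rowStart (a :: g :: gs) 0)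
    · exact Or.inl ((mem_ssyt_iff_corner_lt hg hgs ha).mpr ⟨hU, hcorner⟩)
    · exact Or.inr ⟨_, mergeTopRows_mem_ssyt hg hgs hU (not_lt.mp hcorner),
        splitTopRow_mergeTopRows hg hgs hU.1⟩
  have hdisj : Disjoint (ssyt (ribbonOuter (a :: g :: gs)) (ribbonInner (a :: g :: gs)) m)
      (split '' ssyt (ribbonOuter ((a + g) :: gs)) (ribbonInner ((a + g) :: gs)) m) := by
    rw [Set.disjoint_left]
    rintro _ hU ⟨V, hV, rfl⟩
    exact (splitTopRow_corner_le hg hgs ha hV).not_gt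
      ((mem_ssyt_iff_corner_lt hg hgs ha).mp hU).2
  have hinj : Set.InjOn split
      (ssyt (ribbonOuter ((a + g) :: gs)) (ribbonInner ((a + g) :: gs)) m) :=
    Set.LeftInvOn.injOn fun V hV => mergeTopRows_splitTopRow hg hgs hV.1.1
  rw [hunion, Set.ncard_union_eq hdisj (ssyt_finite _ _ m) ((ssyt_finite _ _ m).image _),
    hinj.ncard_image]

end corner

lemma hN_mul_ribbonSchur_cons {a g : ℕ} {gs : List ℕ} (ha : 0 < a) (hg : 0 < g)
    (hgs : IsCompositionList gs) :
    hN a * ribbonSchur (g :: gs) = ribbonSchur (a :: g :: gs) + ribbonSchur ((a + g) :: gs) := by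
  ext m
  rw [coeff_hN_mul_ribbonSchur (hgs.cons hg), ncard_detachedFillings_cons_cons hg hgs ha,
    map_add, ribbonSchur, ribbonSchur, coeff_skewSchur, coeff_skewSchur]
  push_cast
  rfl

lemma ssyt_nil (m : ℕ →₀ ℕ) : ssyt [] [] m = {T | T = 0 ∧ m = 0} := by
  ext T
  simp [ssyt, IsSkewSSYT, SkewCell, skewContent, funext_iff, Finsupp.ext_iff, eq_comm]

lemma ribbonSchur_nil : ribbonSchur [] = 1 := by
  ext m
  rw [ribbonSchur, coeff_skewSchur, MvPowerSeries.coeff_one]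
  change ((ssyt [] [] m).ncard : ℤ) = _
  split_ifs with hm <;> simp [ssyt_nil, hm]

lemma ribbonSchur_singleton (a : ℕ) : ribbonSchur [a] = hN a := by
  ext m
  rw [ribbonSchur, coeff_skewSchur, ← detachedFillings_singleton, ← coeff_hN_mul_ribbonSchur
    (List.forall_mem_nil _), ribbonSchur_nil, mul_one]

theorem ribbonSchur_eq_signedCoarseningSum :
    ∀ α : List ℕ, IsCompositionList α → ribbonSchur α = signedCoarseningSum hN α
  | [], _ => by rw [ribbonSchur_nil, signedCoarseningSum_nil]
  | [a], _ => by rw [ribbonSchur_singleton, signedCoarseningSum_singleton]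
  | a :: g :: gs, hα => by
    obtain ⟨ha, hg, hgs⟩ : 0 < a ∧ 0 < g ∧ IsCompositionList gs := by
      simpa [IsCompositionList] using hα
    rw [signedCoarseningSum_cons_cons, ← ribbonSchur_eq_signedCoarseningSum _ (hgs.cons hg),
      ← ribbonSchur_eq_signedCoarseningSum _ (hgs.cons (Nat.add_pos_right a hg)),
      hN_mul_ribbonSchur_cons ha hg hgs, add_sub_cancel_right]
termination_by α => α.length

end Ribbon

-- `h` only depends on the multiset of parts, so the coarsening `β` is not sorted into `λ(β)`.
theorem ribbonSchur_h_expansion_general (α : List ℕ) (hα : IsCompositionList α) :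
    ribbonSchur α = ((-1 : ℤ) ^ α.length) •
      ∑ c : Composition α.length,
        ((-1 : ℤ) ^ c.length) • hProd ((α.splitWrtComposition c).map List.sum) :=
  Ribbon.ribbonSchur_eq_signedCoarseningSum α hα

/-- `r_α = (-1)^{ℓ(α)} ∑_{β coarsening of α} (-1)^{ℓ(β)} h_{λ(β)}`, the sum
ranging over all `2^{ℓ(α)-1}` coarsenings of `α`, indexed by compositions of `ℓ(α)`
(`h` only depends on the multiset of parts, so sorting `β` is immaterial). -/
theorem ribbonSchur_h_expansion (α : List ℕ) (hne : α ≠ []) (hα : IsCompositionList α) :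
    ribbonSchur α = ((-1 : ℤ) ^ α.length) •
      ∑ c : Composition α.length,
        ((-1 : ℤ) ^ c.length) • hProd ((α.splitWrtComposition c).map List.sum) :=
  ribbonSchur_h_expansion_general α hα
end
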